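/- arXiv:2312.08531 — 3 statements merged into one kernel-verified Lean document; each statement's English description precedes it below -/
import Mathlib

section
/- Let F be a σ-algebra on a probability space, Z : Ω → ℝ^d an F-measurable random vector, and ξ : Ω → ℝ^d a random vector with E[ξ | F] = 0 almost surely and E[exp(λ‖ξ‖_*²) | F] ≤ exp(λσ²) almost surely for every λ ∈ [0, σ^{−2}], where σ > 0. Then almost surely E[exp(⟨ξ, Z⟩) | F] ≤ exp(σ² ‖Z‖²). -/
open MeasureTheory Real
open scoped RealInnerProductSpace BigOperators

/-- The dual norm of a general norm `nrm` on `ℝ^d`. -/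
noncomputable def dualNorm {d : ℕ} (nrm : EuclideanSpace ℝ (Fin d) → ℝ) (g : EuclideanSpace ℝ (Fin d)) : ℝ :=
  sSup {r : ℝ | ∃ x, nrm x ≤ 1 ∧ r = ⟪g, x⟫}

/-- The subdifferential of `φ` at `y`, relative to the domain `X`. -/
def subgrad {d : ℕ} (X : Set (EuclideanSpace ℝ (Fin d))) (φ : EuclideanSpace ℝ (Fin d) → ℝ) (y : EuclideanSpace ℝ (Fin d)) : Set (EuclideanSpace ℝ (Fin d)) :=
  {g | ∀ x ∈ X, φ y + ⟪g, x - y⟫ ≤ φ x}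

/-- The Bregman divergence associated with `ψ`, whose gradient is `gψ`. -/
noncomputable def breg {d : ℕ} (ψ : EuclideanSpace ℝ (Fin d) → ℝ) (gψ : EuclideanSpace ℝ (Fin d) → EuclideanSpace ℝ (Fin d)) (x y : EuclideanSpace ℝ (Fin d)) : ℝ :=
  ψ x - ψ y - ⟪gψ y, x - y⟫

/-- The σ-algebra `σ(ĝ^1, …, ĝ^t)` generated by the first `t` stochastic gradients. -/
noncomputable def natFilt {Ω : Type*} {d : ℕ}
    (ghat : ℕ → Ω → EuclideanSpace ℝ (Fin d)) (t : ℕ) : MeasurableSpace Ω :=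
  ⨆ s ∈ Finset.Icc 1 t, MeasurableSpace.comap (ghat s) inferInstance

lemma nrm_equiv {d : ℕ} (nrm : EuclideanSpace ℝ (Fin d) → ℝ)
    (hnrm_nonneg : ∀ x, 0 ≤ nrm x)
    (hnrm_zero : ∀ x, nrm x = 0 ↔ x = 0)
    (hnrm_smul : ∀ (c : ℝ) (x : EuclideanSpace ℝ (Fin d)), nrm (c • x) = |c| * nrm x)
    (hnrm_tri : ∀ x y, nrm (x + y) ≤ nrm x + nrm y) :
    ∃ m : ℝ, 0 < m ∧ (∀ x, m * ‖x‖ ≤ nrm x) ∧ Continuous nrm := by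
  have hnrm0 : nrm 0 = 0 := (hnrm_zero 0).mpr rfl
  -- coordinate bound
  have habs : ∀ (x : EuclideanSpace ℝ (Fin d)) (i : Fin d), |x i| ≤ ‖x‖ := by
    intro x i
    have h1 : ⟪EuclideanSpace.single i (1:ℝ), x⟫ = x i := by
      rw [EuclideanSpace.inner_single_left]; simp
    have h2 := abs_real_inner_le_norm (EuclideanSpace.single i (1:ℝ)) x
    rw [h1, EuclideanSpace.norm_single] at h2
    simpa using h2
  -- upper bound
  obtain ⟨C, hC0, hC⟩ : ∃ C : ℝ, 0 ≤ C ∧ ∀ x, nrm x ≤ C * ‖x‖ := by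
    refine ⟨∑ i, nrm (EuclideanSpace.single i (1 : ℝ)),
      Finset.sum_nonneg fun i _ => hnrm_nonneg _, fun x => ?_⟩
    have hsum : ∀ (s : Finset (Fin d)) (f : Fin d → EuclideanSpace ℝ (Fin d)),
        nrm (∑ i ∈ s, f i) ≤ ∑ i ∈ s, nrm (f i) := by
      intro s f
      induction s using Finset.induction_on with
      | empty => simp [hnrm0]
      | insert a s hnot ih =>
        rw [Finset.sum_insert hnot, Finset.sum_insert hnot]
        exact (hnrm_tri _ _).trans (by linarith)
    have hx : x = ∑ i, (x i) • EuclideanSpace.single i (1 : ℝ) := by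
      ext j
      rw [show (∑ i, (x i) • EuclideanSpace.single i (1:ℝ)) j
          = ∑ i, ((x i) • EuclideanSpace.single i (1:ℝ)) j from by rw [WithLp.ofLp_sum]; exact Finset.sum_apply j _ _]
      simp [EuclideanSpace.single_apply]
    calc nrm x = nrm (∑ i, (x i) • EuclideanSpace.single i (1 : ℝ)) := by rw [← hx]
      _ ≤ ∑ i, nrm ((x i) • EuclideanSpace.single i (1 : ℝ)) := hsum _ _
      _ = ∑ i, |x i| * nrm (EuclideanSpace.single i (1 : ℝ)) := by
          simp [hnrm_smul]
      _ ≤ ∑ i, ‖x‖ * nrm (EuclideanSpace.single i (1 : ℝ)) := by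
          refine Finset.sum_le_sum fun i _ => ?_
          exact mul_le_mul_of_nonneg_right (habs x i) (hnrm_nonneg _)
      _ = (∑ i, nrm (EuclideanSpace.single i (1 : ℝ))) * ‖x‖ := by
          simp [Finset.sum_mul, mul_comm]
  -- continuity
  have hlip : Continuous nrm := by
    have key : ∀ a b : EuclideanSpace ℝ (Fin d), nrm a - nrm b ≤ C * ‖a - b‖ := by
      intro a b
      have := hnrm_tri (a - b) b
      simp only [sub_add_cancel] at this
      have := hC (a - b)
      linarith
    refine (LipschitzWith.of_dist_le_mul (K := C.toNNReal) fun a b => ?_).continuous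
    rw [Real.dist_eq, Real.coe_toNNReal C hC0, dist_eq_norm]
    rw [abs_sub_le_iff]
    constructor
    · exact key a b
    · have := key b a
      rwa [show b - a = -(a - b) from (neg_sub a b).symm, norm_neg] at this
  -- lower bound
  rcases subsingleton_or_nontrivial (EuclideanSpace ℝ (Fin d)) with hs | hs
  · refine ⟨1, one_pos, fun x => ?_, hlip⟩
    have : x = 0 := Subsingleton.elim x 0
    simp [this, hnrm0]
  · obtain ⟨a, ha, hmin⟩ := (isCompact_sphere (0 : EuclideanSpace ℝ (Fin d)) 1).exists_isMinOn
      (NormedSpace.sphere_nonempty.mpr zero_le_one) hlip.continuousOn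
    have hanorm : ‖a‖ = 1 := by simpa using mem_sphere_zero_iff_norm.mp ha
    have hane : a ≠ 0 := by intro h; rw [h] at hanorm; simp at hanorm
    have hm_pos : 0 < nrm a := lt_of_le_of_ne (hnrm_nonneg a) fun h => hane ((hnrm_zero a).mp h.symm)
    refine ⟨nrm a, hm_pos, fun x => ?_, hlip⟩
    rcases eq_or_ne x 0 with rfl | hx
    · simp [hnrm0]
    · have hxn : (0:ℝ) < ‖x‖ := norm_pos_iff.mpr hx
      have hu : ‖x‖⁻¹ • x ∈ Metric.sphere (0 : EuclideanSpace ℝ (Fin d)) 1 := by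
        rw [mem_sphere_zero_iff_norm, norm_smul, norm_inv, norm_norm]
        field_simp
      have hmin' : nrm a ≤ nrm (‖x‖⁻¹ • x) := hmin hu
      have h2 : nrm (‖x‖⁻¹ • x) = ‖x‖⁻¹ * nrm x := by
        rw [hnrm_smul, abs_of_pos (inv_pos.mpr hxn)]
      rw [h2] at hmin'
      calc nrm a * ‖x‖ ≤ (‖x‖⁻¹ * nrm x) * ‖x‖ :=
            mul_le_mul_of_nonneg_right hmin' hxn.le
        _ = nrm x := by field_simp

lemma dualNorm_facts {d : ℕ} (nrm : EuclideanSpace ℝ (Fin d) → ℝ)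
    (hnrm_nonneg : ∀ x, 0 ≤ nrm x)
    (hnrm_zero : ∀ x, nrm x = 0 ↔ x = 0)
    (hnrm_smul : ∀ (c : ℝ) (x : EuclideanSpace ℝ (Fin d)), nrm (c • x) = |c| * nrm x)
    {m : ℝ} (hm : 0 < m) (hml : ∀ x, m * ‖x‖ ≤ nrm x) :
    (∀ g, 0 ≤ dualNorm nrm g) ∧
      (∀ g x, |⟪g, x⟫| ≤ dualNorm nrm g * nrm x) := by
  have hnrm0 : nrm 0 = 0 := (hnrm_zero 0).mpr rfl
  have hBdd : ∀ g : EuclideanSpace ℝ (Fin d),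
      BddAbove {r : ℝ | ∃ x, nrm x ≤ 1 ∧ r = ⟪g, x⟫} := by
    intro g
    refine ⟨‖g‖ * m⁻¹, fun r hr => ?_⟩
    obtain ⟨x, hx1, rfl⟩ := hr
    have h1 : ⟪g, x⟫ ≤ ‖g‖ * ‖x‖ := real_inner_le_norm g x
    have h2 : ‖x‖ ≤ m⁻¹ := by
      have := (hml x).trans hx1
      rw [← le_div_iff₀' hm] at this
      simpa [one_div] using this
    calc ⟪g, x⟫ ≤ ‖g‖ * ‖x‖ := h1
      _ ≤ ‖g‖ * m⁻¹ := mul_le_mul_of_nonneg_left h2 (norm_nonneg g)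
  have hmem0 : ∀ g : EuclideanSpace ℝ (Fin d),
      (0:ℝ) ∈ {r : ℝ | ∃ x, nrm x ≤ 1 ∧ r = ⟪g, x⟫} :=
    fun g => ⟨0, by simp [hnrm0], by simp⟩
  have hnonneg : ∀ g, 0 ≤ dualNorm nrm g := fun g => le_csSup (hBdd g) (hmem0 g)
  refine ⟨hnonneg, fun g x => ?_⟩
  have key : ∀ y : EuclideanSpace ℝ (Fin d), ⟪g, y⟫ ≤ dualNorm nrm g * nrm y := by
    intro y
    rcases eq_or_ne y 0 with rfl | hy
    · simp [hnrm0]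
    · have hny : 0 < nrm y :=
        lt_of_le_of_ne (hnrm_nonneg y) fun h => hy ((hnrm_zero y).mp h.symm)
      have hu : nrm ((nrm y)⁻¹ • y) ≤ 1 := by
        rw [hnrm_smul, abs_of_pos (inv_pos.mpr hny)]
        rw [inv_mul_cancel₀ hny.ne']
      have hmem : ⟪g, (nrm y)⁻¹ • y⟫ ∈ {r : ℝ | ∃ x, nrm x ≤ 1 ∧ r = ⟪g, x⟫} :=
        ⟨_, hu, rfl⟩
      have h1 : ⟪g, (nrm y)⁻¹ • y⟫ ≤ dualNorm nrm g := le_csSup (hBdd g) hmem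
      rw [real_inner_smul_right] at h1
      calc ⟪g, y⟫ = nrm y * ((nrm y)⁻¹ * ⟪g, y⟫) := by field_simp
        _ ≤ nrm y * dualNorm nrm g := mul_le_mul_of_nonneg_left h1 hny.le
        _ = dualNorm nrm g * nrm y := mul_comm _ _
  rw [abs_le]
  constructor
  · have := key (-x)
    rw [inner_neg_right] at this
    have hnx : nrm (-x) = nrm x := by
      rw [show -x = (-1:ℝ) • x by simp, hnrm_smul]; simp
    rw [hnx] at this
    linarith
  · exact key x
lemma exp_le_add_exp_sq (x : ℝ) : Real.exp x ≤ x + Real.exp (x ^ 2) := by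
  rcases le_or_gt |x| 1 with h | h
  · have hb := Real.exp_bound h (n := 2) (by norm_num)
    simp [Finset.sum_range_succ] at hb
    rw [abs_sub_le_iff] at hb
    have h2 : (1 : ℝ) + x ^ 2 ≤ Real.exp (x ^ 2) := by
      have := Real.add_one_le_exp (x ^ 2); linarith
    nlinarith [hb.1]
  · rcases le_or_gt 0 x with hx | hx
    · have hx1 : 1 < x := by rwa [abs_of_nonneg hx] at h
      have : x ≤ x ^ 2 := by nlinarith
      have := Real.exp_le_exp.mpr this
      linarith
    · have hx1 : 1 < -x := by rwa [abs_of_neg hx] at h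
      have h1 : Real.exp x ≤ 1 := by
        calc Real.exp x ≤ Real.exp 0 := Real.exp_le_exp.mpr (le_of_lt hx)
        _ = 1 := Real.exp_zero
      have h2 : (1 : ℝ) + x ^ 2 ≤ Real.exp (x ^ 2) := by
        have := Real.add_one_le_exp (x ^ 2); linarith
      nlinarith

/-- Lemma 1 (sub-Gaussian MGF bound): for `F`-measurable `Z` and a centered sub-Gaussian
vector `ξ`, we have `E[exp⟨ξ, Z⟩ | F] ≤ exp(σ²‖Z‖²)` almost surely. -/
theorem subGaussian_inner_mgf
    {Ω : Type*} (F : MeasurableSpace Ω) {mΩ : MeasurableSpace Ω} (μ : Measure Ω) [IsProbabilityMeasure μ]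
    (hF : F ≤ mΩ)
    {d : ℕ}
    (nrm : EuclideanSpace ℝ (Fin d) → ℝ)
    (hnrm_nonneg : ∀ x, 0 ≤ nrm x)
    (hnrm_zero : ∀ x, nrm x = 0 ↔ x = 0)
    (hnrm_smul : ∀ (c : ℝ) (x : EuclideanSpace ℝ (Fin d)), nrm (c • x) = |c| * nrm x)
    (hnrm_tri : ∀ x y, nrm (x + y) ≤ nrm x + nrm y)
    (Z : Ω → EuclideanSpace ℝ (Fin d)) (hZ_meas : Measurable[F] Z)
    (ξ : Ω → EuclideanSpace ℝ (Fin d)) (hξ_meas : Measurable ξ) (hξ_int : Integrable ξ μ)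
    (hmean : μ[ξ|F] =ᵐ[μ] 0)
    (σ : ℝ) (hσ : 0 < σ)
    (hmgf_int : ∀ l ∈ Set.Icc (0 : ℝ) (σ ^ 2)⁻¹,
      Integrable (fun ω => Real.exp (l * dualNorm nrm (ξ ω) ^ 2)) μ)
    (hmgf : ∀ l ∈ Set.Icc (0 : ℝ) (σ ^ 2)⁻¹, ∀ᵐ ω ∂μ,
      (μ[fun ω' => Real.exp (l * dualNorm nrm (ξ ω') ^ 2)|F]) ω ≤ Real.exp (l * σ ^ 2)) :
    ∀ᵐ ω ∂μ,
      (μ[fun ω' => Real.exp ⟪ξ ω', Z ω'⟫|F]) ω ≤ Real.exp (σ ^ 2 * nrm (Z ω) ^ 2) := by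
  letI _inst : MeasurableSpace Ω := mΩ
  obtain ⟨m, hm_pos, hml, hcont⟩ := nrm_equiv nrm hnrm_nonneg hnrm_zero hnrm_smul hnrm_tri
  obtain ⟨hD_nonneg, hD_abs⟩ :=
    dualNorm_facts nrm hnrm_nonneg hnrm_zero hnrm_smul hm_pos hml
  set f : Ω → ℝ := fun ω => Real.exp ⟪ξ ω, Z ω⟫ with hf_def
  by_cases hfi : Integrable f μ
  swap
  · rw [condExp_of_not_integrable hfi]
    filter_upwards with ω
    simp only [Pi.zero_apply]
    positivity
  have hσ2 : (0:ℝ) < σ ^ 2 := by positivity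
  have hZm : Measurable[mΩ] Z := fun s hs => hF _ (hZ_meas hs)
  have hnZF : Measurable[F] fun ω => nrm (Z ω) := hcont.measurable.comp hZ_meas
  have hξm : Measurable[mΩ] ξ := hξ_meas
  have hinner_meas : Measurable[mΩ] fun ω => ⟪ξ ω, Z ω⟫ := hξm.inner hZm
  -- coordinates of ξ have zero conditional mean
  have hmean_i : ∀ i : Fin d, μ[fun ω => ξ ω i|F] =ᵐ[μ] 0 := by
    intro i
    have hint_i : Integrable (fun ω => ξ ω i) μ := by
      have := (EuclideanSpace.proj (𝕜 := ℝ) i).integrable_comp hξ_int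
      simpa using this
    refine (ae_eq_condExp_of_forall_setIntegral_eq hF hint_i
      (fun s _ _ => (integrable_zero _ _ _).integrableOn)
      (fun s hs _ => ?_)
      (StronglyMeasurable.aestronglyMeasurable
        (stronglyMeasurable_zero : StronglyMeasurable[F] (0 : Ω → ℝ)))).symm
    have hξs : ∫ x in s, ξ x ∂μ = 0 := by
      rw [← setIntegral_condExp hF hξ_int hs]
      calc ∫ x in s, (μ[ξ|F]) x ∂μ
          = ∫ x in s, (0 : EuclideanSpace ℝ (Fin d)) ∂μ :=
            integral_congr_ae (ae_restrict_of_ae hmean)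
        _ = 0 := by simp
    have hcomm := (EuclideanSpace.proj (𝕜 := ℝ) i).integral_comp_comm
      (hξ_int.integrableOn (s := s))
    rw [hξs] at hcomm
    simp only [map_zero] at hcomm
    simp only [Pi.zero_apply, integral_zero]
    rw [← hcomm]
    simp
  -- localization principle
  have key : ∀ (A : Set Ω), MeasurableSet[F] A → ∀ (φ : Ω → ℝ), Integrable φ μ →
      (∀ ω ∈ A, f ω ≤ φ ω) →
      ∀ᵐ ω ∂μ, ω ∈ A → (μ[f|F]) ω ≤ (μ[φ|F]) ω := by
    intro A hA φ hφ hle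
    have hAm : MeasurableSet[mΩ] A := hF _ hA
    have h1 : μ[A.indicator f|F] =ᵐ[μ] A.indicator (μ[f|F]) := condExp_indicator hfi hA
    have h2 : μ[A.indicator φ|F] =ᵐ[μ] A.indicator (μ[φ|F]) := condExp_indicator hφ hA
    have h3 : μ[A.indicator f|F] ≤ᵐ[μ] μ[A.indicator φ|F] := by
      refine condExp_mono (hfi.indicator hAm) (hφ.indicator hAm) (ae_of_all _ fun ω => ?_)
      by_cases hω : ω ∈ A
      · simpa [Set.indicator_of_mem hω] using hle ω hω
      · simp [Set.indicator_of_notMem hω]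
    filter_upwards [h1, h2, h3] with ω e1 e2 e3 hωA
    have := e3
    rw [e1, e2] at this
    simpa [Set.indicator_of_mem hωA] using this
  -- case 1 : small `nrm (Z ω)`
  have case1 : ∀ (n : ℕ) (l : ℝ), 0 ≤ l → l ≤ (σ ^ 2)⁻¹ →
      ∀ᵐ ω ∂μ, (nrm (Z ω) ^ 2 ≤ l ∧ nrm (Z ω) ≤ n) →
        (μ[f|F]) ω ≤ Real.exp (l * σ ^ 2) := by
    intro n l h0l hl
    set A : Set Ω := {ω | nrm (Z ω) ^ 2 ≤ l ∧ nrm (Z ω) ≤ n} with hA_def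
    have hA : MeasurableSet[F] A := by
      have hT : MeasurableSet {t : ℝ | t ^ 2 ≤ l ∧ t ≤ (n:ℝ)} :=
        (measurableSet_le (measurable_id.pow_const 2) measurable_const).inter
          (measurableSet_le measurable_id measurable_const)
      exact hnZF hT
    set g0 : Ω → ℝ := A.indicator (fun ω => ⟪ξ ω, Z ω⟫) with hg0_def
    set hl_fun : Ω → ℝ := fun ω => Real.exp (l * dualNorm nrm (ξ ω) ^ 2) with hlf_def
    have hφ1 : Integrable g0 μ := by
      refine Integrable.mono' (hξ_int.norm.const_mul (m⁻¹ * n))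
        ((hinner_meas.indicator (hF _ hA)).aestronglyMeasurable)
        (ae_of_all _ fun ω => ?_)
      by_cases hω : ω ∈ A
      · rw [hg0_def, Set.indicator_of_mem hω]
        have h1 : |⟪ξ ω, Z ω⟫| ≤ ‖ξ ω‖ * ‖Z ω‖ := abs_real_inner_le_norm _ _
        have h2 : ‖Z ω‖ ≤ m⁻¹ * n := by
          have h3 := hml (Z ω)
          have h4 : nrm (Z ω) ≤ n := hω.2
          calc ‖Z ω‖ = m⁻¹ * (m * ‖Z ω‖) := by field_simp
            _ ≤ m⁻¹ * n := by
              refine mul_le_mul_of_nonneg_left ?_ (inv_nonneg.mpr hm_pos.le)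
              linarith
        rw [Real.norm_eq_abs]
        calc |⟪ξ ω, Z ω⟫| ≤ ‖ξ ω‖ * ‖Z ω‖ := h1
          _ ≤ ‖ξ ω‖ * (m⁻¹ * n) := mul_le_mul_of_nonneg_left h2 (norm_nonneg _)
          _ = m⁻¹ * n * ‖ξ ω‖ := by ring
      · rw [hg0_def, Set.indicator_of_notMem hω]
        have : (0:ℝ) ≤ m⁻¹ * n * ‖ξ ω‖ := by positivity
        simpa using this
    have hφ2 : Integrable hl_fun μ := hmgf_int l ⟨h0l, hl⟩
    have hφ : Integrable (g0 + hl_fun) μ := hφ1.add hφ2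
    have hle : ∀ ω ∈ A, f ω ≤ (g0 + hl_fun) ω := by
      intro ω hω
      have hu := hD_abs (ξ ω) (Z ω)
      have hD0 := hD_nonneg (ξ ω)
      have hsq : ⟪ξ ω, Z ω⟫ ^ 2 ≤ l * dualNorm nrm (ξ ω) ^ 2 := by
        have h1 : |⟪ξ ω, Z ω⟫| ^ 2 ≤ (dualNorm nrm (ξ ω) * nrm (Z ω)) ^ 2 := by
          apply pow_le_pow_left₀ (abs_nonneg _) hu
        rw [sq_abs, mul_pow] at h1
        have h2 : nrm (Z ω) ^ 2 ≤ l := hω.1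
        nlinarith [sq_nonneg (dualNorm nrm (ξ ω))]
      calc f ω = Real.exp ⟪ξ ω, Z ω⟫ := rfl
        _ ≤ ⟪ξ ω, Z ω⟫ + Real.exp (⟪ξ ω, Z ω⟫ ^ 2) := exp_le_add_exp_sq _
        _ ≤ ⟪ξ ω, Z ω⟫ + Real.exp (l * dualNorm nrm (ξ ω) ^ 2) :=
            add_le_add le_rfl (Real.exp_le_exp.mpr hsq)
        _ = (g0 + hl_fun) ω := by
            rw [Pi.add_apply, hg0_def, Set.indicator_of_mem hω]
    have hae := key A hA (g0 + hl_fun) hφ hle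
    have hsplit : μ[g0 + hl_fun|F] =ᵐ[μ] μ[g0|F] + μ[hl_fun|F] := condExp_add hφ1 hφ2 F
    have hzero : μ[g0|F] =ᵐ[μ] 0 := by
      have hZiF : ∀ i : Fin d, Measurable[F] fun ω => Z ω i := fun i =>
        ((EuclideanSpace.proj (𝕜 := ℝ) i).continuous.measurable).comp hZ_meas
      have hξi_int : ∀ i : Fin d, Integrable (fun ω => ξ ω i) μ := by
        intro i
        have := (EuclideanSpace.proj (𝕜 := ℝ) i).integrable_comp hξ_int
        simpa using this
      have habs2 : ∀ (x : EuclideanSpace ℝ (Fin d)) (i : Fin d), |x i| ≤ ‖x‖ := by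
        intro x i
        have h1 : ⟪EuclideanSpace.single i (1:ℝ), x⟫ = x i := by
          rw [EuclideanSpace.inner_single_left]; simp
        have h2 := abs_real_inner_le_norm (EuclideanSpace.single i (1:ℝ)) x
        rw [h1, EuclideanSpace.norm_single] at h2
        simpa using h2
      have hint : ∀ i : Fin d,
          Integrable ((fun ω => A.indicator (fun ω' => Z ω' i) ω) * fun ω => ξ ω i) μ := by
        intro i
        refine Integrable.mono' (hξ_int.norm.const_mul (m⁻¹ * n))
          ((((hZiF i).mono hF le_rfl).indicator (hF _ hA)).aestronglyMeasurable.mul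
            (hξi_int i).aestronglyMeasurable)
          (ae_of_all _ fun ω => ?_)
        rw [Pi.mul_apply, Real.norm_eq_abs, abs_mul]
        by_cases hω : ω ∈ A
        · rw [Set.indicator_of_mem hω]
          have h2 : ‖Z ω‖ ≤ m⁻¹ * n := by
            have h3 := hml (Z ω)
            have h4 : nrm (Z ω) ≤ n := hω.2
            calc ‖Z ω‖ = m⁻¹ * (m * ‖Z ω‖) := by field_simp
              _ ≤ m⁻¹ * n := by
                refine mul_le_mul_of_nonneg_left ?_ (inv_nonneg.mpr hm_pos.le)
                linarith
          have h5 : |Z ω i| ≤ m⁻¹ * n := (habs2 (Z ω) i).trans h2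
          have h6 : |ξ ω i| ≤ ‖ξ ω‖ := by
            have := habs2 (ξ ω) i; simpa using this
          have := mul_le_mul h5 h6 (abs_nonneg _) (by positivity)
          simpa using this
        · rw [Set.indicator_of_notMem hω]
          have : (0:ℝ) ≤ m⁻¹ * n * ‖ξ ω‖ := by positivity
          simpa using this
      have heq : g0 = ∑ i : Fin d,
          ((fun ω => A.indicator (fun ω' => Z ω' i) ω) * fun ω => ξ ω i) := by
        funext ω
        rw [Finset.sum_apply]
        by_cases hω : ω ∈ A
        · simp only [hg0_def, Pi.mul_apply, Set.indicator_of_mem hω]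
          rw [PiLp.inner_apply]
          simp [RCLike.inner_apply, mul_comm]
        · simp [hg0_def, Pi.mul_apply, Set.indicator_of_notMem hω]
      rw [heq]
      have hsum := condExp_finsetSum (s := Finset.univ) (fun i _ => hint i) (m := F)
      refine hsum.trans ?_
      have hterm : ∀ i : Fin d,
          μ[(fun ω => A.indicator (fun ω' => Z ω' i) ω) * fun ω => ξ ω i|F] =ᵐ[μ] 0 := by
        intro i
        have hgF : StronglyMeasurable[F] fun ω => A.indicator (fun ω' => Z ω' i) ω := by
          exact ((hZiF i).indicator hA).stronglyMeasurable
        have hmul := condExp_mul_of_stronglyMeasurable_left hgF (hint i) (hξi_int i)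
        refine hmul.trans ?_
        filter_upwards [hmean_i i] with ω hω
        rw [Pi.mul_apply, hω]
        simp
      have hall : ∀ᵐ ω ∂μ, ∀ i : Fin d,
          (μ[(fun ω => A.indicator (fun ω' => Z ω' i) ω) * fun ω => ξ ω i|F]) ω = 0 :=
        ae_all_iff.mpr fun i => hterm i
      filter_upwards [hall] with ω hω
      rw [Finset.sum_apply]
      simp only [Pi.zero_apply]
      exact Finset.sum_eq_zero fun i _ => hω i
    filter_upwards [hae, hsplit, hzero, hmgf l ⟨h0l, hl⟩] with ω e1 e2 e3 e4 hωA
    calc (μ[f|F]) ω ≤ (μ[g0 + hl_fun|F]) ω := e1 hωA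
      _ = (μ[g0|F]) ω + (μ[hl_fun|F]) ω := by rw [e2, Pi.add_apply]
      _ = (μ[hl_fun|F]) ω := by rw [e3]; simp
      _ ≤ Real.exp (l * σ ^ 2) := e4
  -- case 2 : large `nrm (Z ω)`
  have case2 : ∀ n : ℕ,
      ∀ᵐ ω ∂μ, (1 < σ ^ 2 * nrm (Z ω) ^ 2 ∧ nrm (Z ω) ≤ n) →
        (μ[f|F]) ω ≤ Real.exp (σ ^ 2 * nrm (Z ω) ^ 2) := by
    intro n
    set A : Set Ω := {ω | 1 < σ ^ 2 * nrm (Z ω) ^ 2 ∧ nrm (Z ω) ≤ n} with hA_def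
    have hA : MeasurableSet[F] A := by
      have hT : MeasurableSet {t : ℝ | 1 < σ ^ 2 * t ^ 2 ∧ t ≤ (n:ℝ)} :=
        (measurableSet_lt measurable_const ((measurable_id.pow_const 2).const_mul _)).inter
          (measurableSet_le measurable_id measurable_const)
      exact hnZF hT
    set g : Ω → ℝ := A.indicator (fun ω => Real.exp (σ ^ 2 * nrm (Z ω) ^ 2 / 2)) with hg_def
    set h : Ω → ℝ := fun ω => Real.exp ((σ ^ 2)⁻¹ / 2 * dualNorm nrm (ξ ω) ^ 2) with hh_def
    have hlmem : (σ ^ 2)⁻¹ / 2 ∈ Set.Icc (0:ℝ) (σ ^ 2)⁻¹ := by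
      constructor
      · positivity
      · have : (0:ℝ) ≤ (σ ^ 2)⁻¹ := by positivity
        linarith
    have hh_int : Integrable h μ := hmgf_int _ hlmem
    have hgF : StronglyMeasurable[F] g := by
      refine (Measurable.indicator ?_ hA).stronglyMeasurable
      exact Real.measurable_exp.comp (((hnZF.pow_const 2).const_mul _).div_const 2)
    have hg_bdd : ∀ ω, ‖g ω‖ ≤ Real.exp (σ ^ 2 * n ^ 2 / 2) := by
      intro ω
      rw [hg_def]
      by_cases hω : ω ∈ A
      · rw [Set.indicator_of_mem hω, Real.norm_eq_abs, abs_of_pos (Real.exp_pos _)]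
        apply Real.exp_le_exp.mpr
        have h1 : nrm (Z ω) ≤ n := hω.2
        have h0 := hnrm_nonneg (Z ω)
        have h5 : nrm (Z ω) ^ 2 ≤ (n:ℝ) ^ 2 := by nlinarith
        have := mul_le_mul_of_nonneg_left h5 hσ2.le
        linarith
      · rw [Set.indicator_of_notMem hω]
        simp [Real.exp_pos, le_of_lt (Real.exp_pos _)]
    have hφ_int : Integrable (g * h) μ := by
      have := Integrable.bdd_mul (c := Real.exp (σ ^ 2 * n ^ 2 / 2)) hh_int
        ((hgF.mono hF).aestronglyMeasurable) (ae_of_all _ hg_bdd)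
      exact this
    have hle : ∀ ω ∈ A, f ω ≤ (g * h) ω := by
      intro ω hω
      have hu : ⟪ξ ω, Z ω⟫ ≤ dualNorm nrm (ξ ω) * nrm (Z ω) :=
        (le_abs_self _).trans (hD_abs _ _)
      have hD0 := hD_nonneg (ξ ω)
      have hz0 := hnrm_nonneg (Z ω)
      have hpow : (σ⁻¹) ^ 2 = (σ ^ 2)⁻¹ := by rw [inv_pow]
      have hAM : dualNorm nrm (ξ ω) * nrm (Z ω)
          ≤ σ ^ 2 * nrm (Z ω) ^ 2 / 2 + (σ ^ 2)⁻¹ / 2 * dualNorm nrm (ξ ω) ^ 2 := by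
        nlinarith [sq_nonneg (σ ^ 2 * nrm (Z ω) - dualNorm nrm (ξ ω)), hσ2,
          mul_inv_cancel₀ (ne_of_gt hσ2), mul_pos hσ2 hσ2,
          mul_le_mul_of_nonneg_left
            (sq_nonneg (σ ^ 2 * nrm (Z ω) - dualNorm nrm (ξ ω))) (inv_pos.mpr hσ2).le]
      calc f ω = Real.exp ⟪ξ ω, Z ω⟫ := rfl
        _ ≤ Real.exp (σ ^ 2 * nrm (Z ω) ^ 2 / 2 + (σ ^ 2)⁻¹ / 2 * dualNorm nrm (ξ ω) ^ 2) :=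
            Real.exp_le_exp.mpr (hu.trans hAM)
        _ = Real.exp (σ ^ 2 * nrm (Z ω) ^ 2 / 2) * h ω := by rw [Real.exp_add]
        _ = (g * h) ω := by rw [Pi.mul_apply, hg_def, Set.indicator_of_mem hω]
    have hae := key A hA (g * h) hφ_int hle
    have hpull : μ[g * h|F] =ᵐ[μ] g * μ[h|F] :=
      condExp_mul_of_stronglyMeasurable_left hgF hφ_int hh_int
    filter_upwards [hae, hpull, hmgf _ hlmem] with ω e1 e2 e4 hωA
    have hmemA : ω ∈ A := hωA
    have hgω : g ω = Real.exp (σ ^ 2 * nrm (Z ω) ^ 2 / 2) := by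
      rw [hg_def, Set.indicator_of_mem hmemA]
    calc (μ[f|F]) ω ≤ (μ[g * h|F]) ω := e1 hωA
      _ = g ω * (μ[h|F]) ω := by rw [e2, Pi.mul_apply]
      _ ≤ g ω * Real.exp ((σ ^ 2)⁻¹ / 2 * σ ^ 2) := by
          refine mul_le_mul_of_nonneg_left e4 ?_
          rw [hgω]; positivity
      _ ≤ Real.exp (σ ^ 2 * nrm (Z ω) ^ 2) := by
          rw [hgω, ← Real.exp_add]
          apply Real.exp_le_exp.mpr
          have hinv : (σ ^ 2)⁻¹ / 2 * σ ^ 2 = 1 / 2 := by field_simp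
          rw [hinv]
          have hb := hωA.1
          linarith
  -- combine
  have main1 : ∀ᵐ ω ∂μ, ∀ (n : ℕ) (q : ℚ), 0 ≤ (q:ℝ) → (q:ℝ) ≤ (σ ^ 2)⁻¹ →
      ((nrm (Z ω) ^ 2 ≤ (q:ℝ) ∧ nrm (Z ω) ≤ n) →
        (μ[f|F]) ω ≤ Real.exp ((q:ℝ) * σ ^ 2)) := by
    rw [ae_all_iff]
    intro n
    rw [ae_all_iff]
    intro q
    by_cases hq : 0 ≤ (q:ℝ) ∧ (q:ℝ) ≤ (σ ^ 2)⁻¹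
    · filter_upwards [case1 n q hq.1 hq.2] with ω hω _ _ h
      exact hω h
    · filter_upwards with ω h1 h2
      exact absurd ⟨h1, h2⟩ hq
  have main1' : ∀ᵐ ω ∂μ, ∀ n : ℕ,
      ((nrm (Z ω) ^ 2 ≤ (σ ^ 2)⁻¹ ∧ nrm (Z ω) ≤ n) →
        (μ[f|F]) ω ≤ Real.exp ((σ ^ 2)⁻¹ * σ ^ 2)) := by
    rw [ae_all_iff]
    intro n
    exact case1 n _ (by positivity) le_rfl
  have main2 : ∀ᵐ ω ∂μ, ∀ n : ℕ,
      ((1 < σ ^ 2 * nrm (Z ω) ^ 2 ∧ nrm (Z ω) ≤ n) →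
        (μ[f|F]) ω ≤ Real.exp (σ ^ 2 * nrm (Z ω) ^ 2)) := by
    rw [ae_all_iff]; exact case2
  filter_upwards [main1, main1', main2] with ω h1 h1' h2
  set z : ℝ := nrm (Z ω) with hz_def
  have hz0 : 0 ≤ z := hnrm_nonneg _
  set n : ℕ := ⌈z⌉₊ with hn_def
  have hzn : z ≤ n := Nat.le_ceil z
  by_cases hbig : 1 < σ ^ 2 * z ^ 2
  · exact h2 n ⟨hbig, hzn⟩
  · push_neg at hbig
    have hz2 : z ^ 2 ≤ (σ ^ 2)⁻¹ := by
      rw [← one_div, le_div_iff₀ hσ2]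
      nlinarith [hbig]
    rcases eq_or_lt_of_le hz2 with heq | hlt
    · have := h1' n ⟨le_of_eq heq, hzn⟩
      have hval : (σ ^ 2)⁻¹ * σ ^ 2 = σ ^ 2 * z ^ 2 := by
        rw [heq]
        field_simp
      rwa [hval] at this
    · by_contra hcon
      push_neg at hcon
      have hc : Continuous fun y : ℝ => Real.exp (y * σ ^ 2) :=
        Real.continuous_exp.comp (continuous_id.mul continuous_const)
      have hev : ∀ᶠ y in nhds (z ^ 2), Real.exp (y * σ ^ 2) < (μ[f|F]) ω := by
        refine (hc.continuousAt).eventually_lt_const ?_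
        rwa [mul_comm] at hcon
      obtain ⟨δ, hδ, hball⟩ := Metric.eventually_nhds_iff.mp hev
      obtain ⟨q, hq1, hq2⟩ := exists_rat_btwn (lt_min (lt_add_of_pos_right (z ^ 2) hδ) hlt)
      have hqδ : |(q:ℝ) - z ^ 2| < δ := by
        rw [abs_lt]
        constructor
        · linarith
        · have := hq2.trans_le (min_le_left _ _)
          linarith
      have := h1 n q (le_trans (by positivity : (0:ℝ) ≤ z ^ 2) hq1.le)
        (le_of_lt (hq2.trans_le (min_le_right _ _)))
        ⟨hq1.le, hzn⟩
      exact absurd this (not_le.mpr (hball hqδ))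
end

section
/- Let p ∈ [1, 2). Let F be a σ-algebra on a probability space, Z : Ω → ℝ^d an F-measurable random vector with ‖Z‖ ≤ 1/(2σ) almost surely, and ξ : Ω → ℝ^d a random vector with E[ξ | F] = 0 almost surely and E[exp(λ‖ξ‖_*^p) | F] ≤ exp(λσ^p) almost surely for every λ ∈ [0, σ^{−p}], where σ > 0. Then almost surely E[exp(⟨ξ, Z⟩) | F] ≤ exp(6σ² ‖Z‖²). -/
open MeasureTheory Real
open scoped RealInnerProductSpace BigOperators

/- ### Auxiliary lemmas -/


-- exp y ≤ 1 + y + y^2/2 for y ≤ 0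
lemma aux_exp_neg (y : ℝ) (hy : y ≤ 0) : Real.exp y ≤ 1 + y + y^2/2 := by
  have key : ∀ x ∈ Set.Iic (0:ℝ), (0:ℝ) ≤ 1 + x + x^2/2 - Real.exp x := by
    have hanti : AntitoneOn (fun x : ℝ => 1 + x + x^2/2 - Real.exp x) (Set.Iic 0) := by
      apply antitoneOn_of_deriv_nonpos (convex_Iic 0)
      · fun_prop
      · intro x hx
        exact (((((hasDerivAt_id x).const_add 1).add (((hasDerivAt_pow 2 x)).div_const 2)).sub
          (Real.hasDerivAt_exp x)).differentiableAt).differentiableWithinAt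
      · intro x hx
        simp only [interior_Iic, Set.mem_Iio] at hx
        have hd : deriv (fun x : ℝ => 1 + x + x^2/2 - Real.exp x) x = 1 + x - Real.exp x := by
          have : HasDerivAt (fun x : ℝ => 1 + x + x^2/2 - Real.exp x)
              (0 + 1 + (2 * x^1)/2 - Real.exp x) x := by
            exact ((((hasDerivAt_const x (1:ℝ)).add (hasDerivAt_id x)).add
              ((hasDerivAt_pow 2 x).div_const 2)).sub (Real.hasDerivAt_exp x))
          rw [this.deriv]; ring
        rw [hd]
        have := Real.add_one_le_exp x
        linarith
    intro x hx
    have := hanti hx (Set.mem_Iic.2 le_rfl) hx.out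
    simpa using this
  have := key y hy
  linarith

-- (1 - x) * exp x ≥ 1 - x^2/2 for x ≤ 0
lemma aux_exp_neg2 (x : ℝ) (hx : x ≤ 0) : 1 - x^2/2 ≤ (1 - x) * Real.exp x := by
  have key : ∀ z ∈ Set.Iic (0:ℝ), (0:ℝ) ≤ (1 - z) * Real.exp z - 1 + z^2/2 := by
    have hanti : AntitoneOn (fun z : ℝ => (1 - z) * Real.exp z - 1 + z^2/2) (Set.Iic 0) := by
      apply antitoneOn_of_deriv_nonpos (convex_Iic 0)
      · fun_prop
      · intro z hz
        apply DifferentiableAt.differentiableWithinAt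
        fun_prop
      · intro z hz
        simp only [interior_Iic, Set.mem_Iio] at hz
        have hd : HasDerivAt (fun z : ℝ => (1 - z) * Real.exp z - 1 + z^2/2)
            ((0 - 1) * Real.exp z + (1 - z) * Real.exp z - 0 + (2 * z^1)/2) z := by
          exact ((((hasDerivAt_const z (1:ℝ)).sub (hasDerivAt_id z)).mul
            (Real.hasDerivAt_exp z)).sub (hasDerivAt_const z 1)).add
            ((hasDerivAt_pow 2 z).div_const 2)
        rw [hd.deriv]
        have h1 : Real.exp z ≤ 1 := Real.exp_le_one_iff.2 hz.le
        nlinarith [Real.exp_pos z]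
    intro z hz
    have := hanti hz (Set.mem_Iic.2 le_rfl) hz.out
    simpa using this
  have := key x hx
  nlinarith [Real.exp_pos x]

lemma exp_le_taylor (y : ℝ) : Real.exp y ≤ 1 + y + y^2/2 * Real.exp |y| := by
  rcases le_or_gt y 0 with hy | hy
  · have h1 := aux_exp_neg y hy
    have h2 : (1:ℝ) ≤ Real.exp |y| := Real.one_le_exp (abs_nonneg y)
    nlinarith [sq_nonneg y]
  · have h1 := aux_exp_neg2 (-y) (by linarith)
    rw [abs_of_pos hy]
    have h2 := Real.exp_pos y
    have h3 : Real.exp (-y) = (Real.exp y)⁻¹ := Real.exp_neg y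
    rw [h3] at h1
    have h4 : (1 - -y) * (Real.exp y)⁻¹ * Real.exp y = 1 + y := by
      field_simp
      ring
    nlinarith [sq_nonneg y]


lemma aux_half_le {p v : ℝ} (hp : 1 ≤ p) (hv : 0 ≤ v) : v/2 ≤ 1/2 + v^p/2 := by
  rcases le_or_gt v 1 with h | h
  · have : (0:ℝ) ≤ v ^ p := Real.rpow_nonneg hv p
    linarith
  · have : v ^ (1:ℝ) ≤ v ^ p := Real.rpow_le_rpow_of_exponent_le h.le hp
    rw [Real.rpow_one] at this
    linarith

lemma aux_sq_le {p v : ℝ} (hp : 1 ≤ p) (hv : 0 ≤ v) :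
    v^2 ≤ 16 * Real.exp (-2) * Real.exp (v^p/2) := by
  have he2 : Real.exp 2 ≤ 16 := by
    have h := Real.exp_one_lt_d9
    have : Real.exp 2 = Real.exp 1 * Real.exp 1 := by rw [← Real.exp_add]; norm_num
    nlinarith [Real.exp_pos 1]
  have hinv : Real.exp (-2) * Real.exp 2 = 1 := by rw [← Real.exp_add]; norm_num
  rcases le_or_gt v 1 with h | h
  · have h1 : (1:ℝ) ≤ Real.exp (v^p/2) :=
      Real.one_le_exp (by positivity)
    have h2 : (1:ℝ) ≤ 16 * Real.exp (-2) := by nlinarith [Real.exp_pos (-2), Real.exp_pos 2]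
    nlinarith [Real.exp_pos (-2)]
  · -- v ≥ 1 : v^p ≥ v, reduce to v² ≤ 16 e^{-2} e^{v/2}
    have hvp : v ≤ v ^ p := by
      have := Real.rpow_le_rpow_of_exponent_le h.le hp
      rwa [Real.rpow_one] at this
    have hmon : Real.exp (v/2) ≤ Real.exp (v^p/2) := Real.exp_le_exp.2 (by linarith)
    have key : v^2 ≤ 16 * Real.exp (-2) * Real.exp (v/2) := by
      set a := v/4 with ha
      have ha0 : 0 ≤ a := by positivity
      have h1 : a ≤ Real.exp (a - 1) := by
        have := Real.add_one_le_exp (a - 1); linarith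
      have h2 : a^2 ≤ Real.exp (a-1) * Real.exp (a-1) := by nlinarith [Real.exp_pos (a-1)]
      have h3 : Real.exp (a-1) * Real.exp (a-1) = Real.exp (-2) * Real.exp (v/2) := by
        rw [← Real.exp_add, ← Real.exp_add]; congr 1; rw [ha]; ring
      have h4 : v^2 = 16 * a^2 := by rw [ha]; ring
      rw [h4]; nlinarith [h2, h3]
    nlinarith [Real.exp_pos (-2), Real.exp_pos (v/2)]

lemma aux_const : 8 * Real.exp (-(3/2) : ℝ) * Real.exp 1 ≤ 6 := by
  have h : 8 * Real.exp (-(3/2) : ℝ) * Real.exp 1 = 8 * Real.exp (-(1/2) : ℝ) := by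
    rw [mul_assoc, ← Real.exp_add]; norm_num
  rw [h]
  have h1 : (3/2 : ℝ) ≤ Real.exp (1/2 : ℝ) := by
    have := Real.add_one_le_exp (1/2 : ℝ); linarith
  have h2 : Real.exp (-(1/2):ℝ) * Real.exp (1/2:ℝ) = 1 := by rw [← Real.exp_add]; norm_num
  nlinarith [Real.exp_pos (-(1/2):ℝ), Real.exp_pos ((1/2):ℝ)]

lemma key_pt {p σ u t y : ℝ} (hp : 1 ≤ p) (hσ : 0 < σ) (hu : 0 ≤ u) (ht0 : 0 ≤ t)
    (ht : t ≤ 1/(2*σ)) (hy : |y| ≤ u * t) :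
    Real.exp y ≤ 1 + y + 8 * Real.exp (-(3/2):ℝ) * (σ^2 * t^2 * Real.exp ((σ^p)⁻¹ * u^p)) := by
  set v := u / σ with hv_def
  have hv : 0 ≤ v := by positivity
  have hvp : v ^ p = (σ^p)⁻¹ * u^p := by
    rw [hv_def, Real.div_rpow hu hσ.le]; ring
  set A := Real.exp (v^p/2) with hA_def
  have hA : 0 < A := Real.exp_pos _
  have hut : u * t ≤ v/2 := by
    calc u * t ≤ u * (1/(2*σ)) := mul_le_mul_of_nonneg_left ht hu
      _ = v/2 := by rw [hv_def]; field_simp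
  have he : Real.exp |y| ≤ Real.exp (1/2) * A := by
    rw [hA_def, ← Real.exp_add]
    apply Real.exp_le_exp.2
    calc |y| ≤ u * t := hy
      _ ≤ v/2 := hut
      _ ≤ 1/2 + v^p/2 := aux_half_le hp hv
  have hy2 : y^2 ≤ σ^2 * t^2 * v^2 := by
    have h1 : |y| ≤ v/2 * 1 := by rw [mul_one]; exact hy.trans hut
    have huv : u = σ * v := by rw [hv_def]; field_simp
    have h2 : y^2 ≤ (u*t)^2 := by
      rw [← sq_abs y]
      apply pow_le_pow_left₀ (abs_nonneg y) hy 2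
    calc y^2 ≤ (u*t)^2 := h2
      _ = σ^2 * t^2 * v^2 := by rw [huv]; ring
  have hv2 : v^2 ≤ 16 * Real.exp (-2) * A := aux_sq_le hp hv
  have hfinal : y^2/2 * Real.exp |y| ≤
      8 * Real.exp (-(3/2):ℝ) * (σ^2 * t^2 * Real.exp ((σ^p)⁻¹ * u^p)) := by
    have step1 : y^2/2 * Real.exp |y| ≤ (σ^2 * t^2 * v^2 / 2) * (Real.exp (1/2) * A) := by
      apply mul_le_mul (by linarith) he (Real.exp_nonneg _) (by positivity)
    have step2 : (σ^2 * t^2 * v^2 / 2) * (Real.exp (1/2) * A)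
        ≤ (σ^2 * t^2 * (16 * Real.exp (-2) * A) / 2) * (Real.exp (1/2) * A) := by
      gcongr
    have step3 : (σ^2 * t^2 * (16 * Real.exp (-2) * A) / 2) * (Real.exp (1/2) * A)
        = 8 * (Real.exp (-2) * Real.exp (1/2)) * (σ^2 * t^2 * (A * A)) := by ring
    have h4 : Real.exp (-2) * Real.exp (1/2) = Real.exp (-(3/2):ℝ) := by
      rw [← Real.exp_add]; norm_num
    have h5 : A * A = Real.exp ((σ^p)⁻¹ * u^p) := by
      rw [hA_def, ← Real.exp_add, ← hvp]; ring_nf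
    calc y^2/2 * Real.exp |y| ≤ _ := step1
      _ ≤ _ := step2
      _ = _ := step3
      _ = 8 * Real.exp (-(3/2):ℝ) * (σ^2 * t^2 * Real.exp ((σ^p)⁻¹ * u^p)) := by
          rw [h4, h5]
  calc Real.exp y ≤ 1 + y + y^2/2 * Real.exp |y| := exp_le_taylor y
    _ ≤ _ := by linarith

section NrmFacts
variable {d : ℕ} {nrm : EuclideanSpace ℝ (Fin d) → ℝ}
  (hnrm_nonneg : ∀ x, 0 ≤ nrm x)
  (hnrm_zero : ∀ x, nrm x = 0 ↔ x = 0)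
  (hnrm_smul : ∀ (c : ℝ) (x : EuclideanSpace ℝ (Fin d)), nrm (c • x) = |c| * nrm x)
  (hnrm_tri : ∀ x y, nrm (x + y) ≤ nrm x + nrm y)

include hnrm_zero in
lemma nrm_zero : nrm 0 = 0 := (hnrm_zero 0).2 rfl

include hnrm_smul in
lemma nrm_neg (x : EuclideanSpace ℝ (Fin d)) : nrm (-x) = nrm x := by
  have := hnrm_smul (-1) x
  simpa using this

lemma coord_abs_le_norm (x : EuclideanSpace ℝ (Fin d)) (i : Fin d) : |x i| ≤ ‖x‖ := by
  rw [EuclideanSpace.norm_eq]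
  have h1 : |x i| = Real.sqrt (‖x i‖^2) := by
    rw [Real.sqrt_sq_eq_abs]; simp [Real.norm_eq_abs]
  rw [h1]
  apply Real.sqrt_le_sqrt
  exact Finset.single_le_sum (f := fun j => ‖x j‖^2) (fun j _ => by positivity) (Finset.mem_univ i)

include hnrm_zero hnrm_tri in
lemma nrm_sum_le {ι : Type*} (s : Finset ι) (f : ι → EuclideanSpace ℝ (Fin d)) :
    nrm (∑ i ∈ s, f i) ≤ ∑ i ∈ s, nrm (f i) := by
  induction s using Finset.cons_induction with
  | empty => simp [nrm_zero hnrm_zero]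
  | cons a s ha ih =>
      rw [Finset.sum_cons, Finset.sum_cons]
      exact (hnrm_tri _ _).trans (by linarith)

include hnrm_nonneg hnrm_zero hnrm_smul hnrm_tri in
lemma nrm_upper : ∃ C : ℝ, 0 ≤ C ∧ ∀ x, nrm x ≤ C * ‖x‖ := by
  refine ⟨∑ i, nrm (EuclideanSpace.basisFun (Fin d) ℝ i), ?_, ?_⟩
  · exact Finset.sum_nonneg fun i _ => hnrm_nonneg _
  · intro x
    have hx : x = ∑ i, x i • EuclideanSpace.basisFun (Fin d) ℝ i := by
      have := (EuclideanSpace.basisFun (Fin d) ℝ).sum_repr x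
      simp only [EuclideanSpace.basisFun_repr] at this
      exact this.symm
    calc nrm x = nrm (∑ i, x i • EuclideanSpace.basisFun (Fin d) ℝ i) := by rw [← hx]
      _ ≤ ∑ i, nrm (x i • EuclideanSpace.basisFun (Fin d) ℝ i) :=
          nrm_sum_le hnrm_zero hnrm_tri _ _
      _ = ∑ i, |x i| * nrm (EuclideanSpace.basisFun (Fin d) ℝ i) := by
          simp [hnrm_smul]
      _ ≤ ∑ i, ‖x‖ * nrm (EuclideanSpace.basisFun (Fin d) ℝ i) := by
          apply Finset.sum_le_sum
          intro i _
          exact mul_le_mul_of_nonneg_right (coord_abs_le_norm x i) (hnrm_nonneg _)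
      _ = (∑ i, nrm (EuclideanSpace.basisFun (Fin d) ℝ i)) * ‖x‖ := by
          rw [Finset.sum_mul]; congr 1; ext i; ring

include hnrm_nonneg hnrm_zero hnrm_smul hnrm_tri in
lemma nrm_continuous : Continuous nrm := by
  obtain ⟨C, hC0, hC⟩ := nrm_upper hnrm_nonneg hnrm_zero hnrm_smul hnrm_tri
  have hlip : LipschitzWith (Real.toNNReal C) nrm := by
    apply LipschitzWith.of_dist_le_mul
    intro x y
    have h1 : nrm x ≤ nrm (x - y) + nrm y := by
      have := hnrm_tri (x - y) y
      simpa using this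
    have h2 : nrm y ≤ nrm (x - y) + nrm x := by
      have := hnrm_tri (y - x) x
      have hneg : nrm (y - x) = nrm (x - y) := by
        rw [show y - x = -(x - y) from (neg_sub x y).symm, nrm_neg hnrm_smul]
      simpa [hneg] using this
    have h3 : nrm (x - y) ≤ C * ‖x - y‖ := hC _
    rw [Real.dist_eq, dist_eq_norm]
    rw [Real.coe_toNNReal C hC0]
    rw [abs_le]
    constructor <;> linarith
  exact hlip.continuous

include hnrm_nonneg hnrm_zero hnrm_smul hnrm_tri in
lemma nrm_lower : ∃ m : ℝ, 0 < m ∧ ∀ x, m * ‖x‖ ≤ nrm x := by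
  by_cases hd : ∃ x : EuclideanSpace ℝ (Fin d), x ≠ 0
  · obtain ⟨x₀, hx₀⟩ := hd
    have hsne : (Metric.sphere (0 : EuclideanSpace ℝ (Fin d)) 1).Nonempty := by
      refine ⟨‖x₀‖⁻¹ • x₀, ?_⟩
      simp [norm_smul, norm_ne_zero_iff.2 hx₀, abs_of_pos (inv_pos.2 (norm_pos_iff.2 hx₀)),
        inv_mul_cancel₀ (norm_ne_zero_iff.2 hx₀)]
    obtain ⟨y, hy_mem, hy_min⟩ := (isCompact_sphere (0 : EuclideanSpace ℝ (Fin d)) 1).exists_isMinOn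
      hsne ((nrm_continuous hnrm_nonneg hnrm_zero hnrm_smul hnrm_tri).continuousOn)
    have hy_norm : ‖y‖ = 1 := by simpa using hy_mem
    have hy_ne : y ≠ 0 := by
      intro h; rw [h] at hy_norm; simp at hy_norm
    refine ⟨nrm y, lt_of_le_of_ne (hnrm_nonneg y) (fun h => hy_ne ((hnrm_zero y).1 h.symm)), ?_⟩
    intro x
    rcases eq_or_ne x 0 with rfl | hx
    · simp [nrm_zero hnrm_zero]
    · have hxn : (0:ℝ) < ‖x‖ := norm_pos_iff.2 hx
      have hmem : ‖x‖⁻¹ • x ∈ Metric.sphere (0 : EuclideanSpace ℝ (Fin d)) 1 := by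
        simp [norm_smul, abs_of_pos (inv_pos.2 hxn), inv_mul_cancel₀ hxn.ne']
      have := hy_min hmem
      simp only [Set.mem_setOf_eq] at this
      have h2 : nrm (‖x‖⁻¹ • x) = ‖x‖⁻¹ * nrm x := by
        rw [hnrm_smul, abs_of_pos (inv_pos.2 hxn)]
      rw [h2] at this
      calc nrm y * ‖x‖ ≤ (‖x‖⁻¹ * nrm x) * ‖x‖ := by
            apply mul_le_mul_of_nonneg_right this hxn.le
        _ = nrm x := by field_simp
  · push_neg at hd
    refine ⟨1, one_pos, fun x => ?_⟩
    rw [hd x]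
    simp [nrm_zero hnrm_zero]

include hnrm_nonneg hnrm_zero hnrm_smul hnrm_tri in
lemma dual_bddAbove (g : EuclideanSpace ℝ (Fin d)) :
    BddAbove {r : ℝ | ∃ x, nrm x ≤ 1 ∧ r = ⟪g, x⟫} := by
  obtain ⟨m, hm0, hm⟩ := nrm_lower hnrm_nonneg hnrm_zero hnrm_smul hnrm_tri
  refine ⟨‖g‖ * (1/m), ?_⟩
  rintro r ⟨x, hx1, rfl⟩
  calc ⟪g, x⟫ ≤ ‖g‖ * ‖x‖ := real_inner_le_norm g x
    _ ≤ ‖g‖ * (1/m) := by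
        apply mul_le_mul_of_nonneg_left _ (norm_nonneg g)
        rw [le_div_iff₀ hm0]
        calc ‖x‖ * m = m * ‖x‖ := by ring
          _ ≤ nrm x := hm x
          _ ≤ 1 := hx1

include hnrm_nonneg hnrm_zero hnrm_smul hnrm_tri in
lemma dual_nonneg (g : EuclideanSpace ℝ (Fin d)) : 0 ≤ dualNorm nrm g := by
  apply le_csSup (dual_bddAbove hnrm_nonneg hnrm_zero hnrm_smul hnrm_tri g)
  exact ⟨0, by simp [nrm_zero hnrm_zero], by simp⟩

include hnrm_nonneg hnrm_zero hnrm_smul hnrm_tri in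
lemma dual_abs_le (g x : EuclideanSpace ℝ (Fin d)) :
    |⟪g, x⟫| ≤ dualNorm nrm g * nrm x := by
  rcases eq_or_ne x 0 with rfl | hx
  · simp [nrm_zero hnrm_zero]
  · have ht : 0 < nrm x :=
      lt_of_le_of_ne (hnrm_nonneg x) (fun h => hx ((hnrm_zero x).1 h.symm))
    set t := nrm x with htd
    have hbdd := dual_bddAbove hnrm_nonneg hnrm_zero hnrm_smul hnrm_tri g
    have h1 : t⁻¹ * ⟪g, x⟫ ≤ dualNorm nrm g := by
      apply le_csSup hbdd
      refine ⟨t⁻¹ • x, ?_, ?_⟩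
      · rw [hnrm_smul, abs_of_pos (inv_pos.2 ht), ← htd, inv_mul_cancel₀ ht.ne']
      · rw [real_inner_smul_right]
    have h2 : -(t⁻¹ * ⟪g, x⟫) ≤ dualNorm nrm g := by
      apply le_csSup hbdd
      refine ⟨t⁻¹ • (-x), ?_, ?_⟩
      · rw [hnrm_smul, abs_of_pos (inv_pos.2 ht), nrm_neg hnrm_smul, ← htd,
          inv_mul_cancel₀ ht.ne']
      · rw [real_inner_smul_right, inner_neg_right]; ring
    have h3 : |t⁻¹ * ⟪g, x⟫| ≤ dualNorm nrm g := abs_le.2 ⟨by linarith, h1⟩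
    have h4 : |⟪g, x⟫| = t * |t⁻¹ * ⟪g, x⟫| := by
      rw [abs_mul, abs_of_pos (inv_pos.2 ht)]
      field_simp
    rw [h4]
    calc t * |t⁻¹ * ⟪g, x⟫| ≤ t * dualNorm nrm g := by
          apply mul_le_mul_of_nonneg_left h3 ht.le
      _ = dualNorm nrm g * t := by ring

end NrmFacts


/-- Lemma 4 (sub-Weibull MGF bound, `p ∈ [1,2)`): for `F`-measurable `Z` with
`‖Z‖ ≤ 1/(2σ)` a.s. and a centered sub-Weibull vector `ξ`,
`E[exp⟨ξ, Z⟩ | F] ≤ exp(6σ²‖Z‖²)` almost surely. -/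
theorem subWeibull_inner_mgf
    (p : ℝ) (hp1 : 1 ≤ p) (hp2 : p < 2)
    {Ω : Type*} (F : MeasurableSpace Ω) {mΩ : MeasurableSpace Ω} (μ : Measure Ω) [IsProbabilityMeasure μ]
    (hF : F ≤ mΩ)
    {d : ℕ}
    (nrm : EuclideanSpace ℝ (Fin d) → ℝ)
    (hnrm_nonneg : ∀ x, 0 ≤ nrm x)
    (hnrm_zero : ∀ x, nrm x = 0 ↔ x = 0)
    (hnrm_smul : ∀ (c : ℝ) (x : EuclideanSpace ℝ (Fin d)), nrm (c • x) = |c| * nrm x)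
    (hnrm_tri : ∀ x y, nrm (x + y) ≤ nrm x + nrm y)
    (Z : Ω → EuclideanSpace ℝ (Fin d)) (hZ_meas : Measurable[F] Z)
    (σ : ℝ) (hσ : 0 < σ)
    (hZ_bdd : ∀ᵐ ω ∂μ, nrm (Z ω) ≤ 1 / (2 * σ))
    (ξ : Ω → EuclideanSpace ℝ (Fin d)) (hξ_meas : Measurable ξ) (hξ_int : Integrable ξ μ)
    (hmean : μ[ξ|F] =ᵐ[μ] 0)
    (hmgf_int : ∀ l ∈ Set.Icc (0 : ℝ) (σ ^ p)⁻¹,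
      Integrable (fun ω => Real.exp (l * dualNorm nrm (ξ ω) ^ p)) μ)
    (hmgf : ∀ l ∈ Set.Icc (0 : ℝ) (σ ^ p)⁻¹, ∀ᵐ ω ∂μ,
      (μ[fun ω' => Real.exp (l * dualNorm nrm (ξ ω') ^ p)|F]) ω ≤ Real.exp (l * σ ^ p)) :
    ∀ᵐ ω ∂μ,
      (μ[fun ω' => Real.exp ⟪ξ ω', Z ω'⟫|F]) ω ≤ Real.exp (6 * σ ^ 2 * nrm (Z ω) ^ 2) := by

  letI : MeasurableSpace Ω := mΩ
  obtain ⟨m, hm0, hm⟩ := nrm_lower hnrm_nonneg hnrm_zero hnrm_smul hnrm_tri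
  have hσp : (0:ℝ) < σ ^ p := Real.rpow_pos_of_pos hσ p
  have hZmeas' : Measurable[mΩ] Z := hZ_meas.mono hF le_rfl
  have hTmeas : Measurable[mΩ] (fun ω => nrm (Z ω)) := ((nrm_continuous hnrm_nonneg hnrm_zero hnrm_smul hnrm_tri)).measurable.comp hZmeas'
  have hu0 : ∀ ω, 0 ≤ dualNorm nrm (ξ ω) := fun ω => dual_nonneg hnrm_nonneg hnrm_zero hnrm_smul hnrm_tri (ξ ω)
  have hT0 : ∀ x, 0 ≤ nrm x := hnrm_nonneg
  -- the integrable exponential dominators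
  set G : Ω → ℝ := fun ω => Real.exp ((σ^p)⁻¹ * dualNorm nrm (ξ ω) ^ p) with hG_def
  have iG : Integrable G μ := hmgf_int (σ^p)⁻¹ ⟨inv_nonneg.2 hσp.le, le_rfl⟩
  set G₂ : Ω → ℝ := fun ω => Real.exp ((σ^p)⁻¹/2 * dualNorm nrm (ξ ω) ^ p) with hG2_def
  have iG₂ : Integrable G₂ μ := hmgf_int ((σ^p)⁻¹/2)
    ⟨div_nonneg (inv_nonneg.2 hσp.le) (by norm_num), by linarith [inv_nonneg.2 hσp.le]⟩
  -- the inner product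
  have hY_meas : Measurable[mΩ] (fun ω => ⟪ξ ω, Z ω⟫) := hξ_meas.inner hZmeas'
  have habs : ∀ ω, |⟪ξ ω, Z ω⟫| ≤ dualNorm nrm (ξ ω) * nrm (Z ω) :=
    fun ω => dual_abs_le hnrm_nonneg hnrm_zero hnrm_smul hnrm_tri (ξ ω) (Z ω)
  have hexpabs : ∀ᵐ ω ∂μ, Real.exp |⟪ξ ω, Z ω⟫| ≤ Real.exp (1/2) * G₂ ω := by
    filter_upwards [hZ_bdd] with ω hω
    rw [hG2_def, ← Real.exp_add]
    apply Real.exp_le_exp.2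
    set u := dualNorm nrm (ξ ω)
    have h1 : |⟪ξ ω, Z ω⟫| ≤ u * (1/(2*σ)) :=
      (habs ω).trans (mul_le_mul_of_nonneg_left hω (hu0 ω))
    have hv : (0:ℝ) ≤ u/σ := div_nonneg (hu0 ω) hσ.le
    have h2 := aux_half_le hp1 hv
    have h3 : (u/σ) ^ p = (σ^p)⁻¹ * u^p := by
      rw [Real.div_rpow (hu0 ω) hσ.le]; ring
    have h4 : u * (1/(2*σ)) = (u/σ)/2 := by ring
    rw [h4] at h1
    rw [h3] at h2
    calc |⟪ξ ω, Z ω⟫| ≤ (u/σ)/2 := h1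
      _ ≤ 1/2 + ((σ^p)⁻¹ * u^p)/2 := h2
      _ = 1/2 + (σ^p)⁻¹/2 * u^p := by ring
  have iexpY : Integrable (fun ω => Real.exp ⟪ξ ω, Z ω⟫) μ := by
    apply Integrable.mono' (iG₂.const_mul (Real.exp (1/2)))
      (hY_meas.exp.aestronglyMeasurable)
    filter_upwards [hexpabs] with ω hω
    rw [Real.norm_eq_abs, abs_of_pos (Real.exp_pos _)]
    exact (Real.exp_le_exp.2 (le_abs_self _)).trans hω
  have iY : Integrable (fun ω => ⟪ξ ω, Z ω⟫) μ := by
    apply Integrable.mono' (iG₂.const_mul (Real.exp (1/2))) hY_meas.aestronglyMeasurable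
    filter_upwards [hexpabs] with ω hω
    rw [Real.norm_eq_abs]
    calc |⟪ξ ω, Z ω⟫| ≤ Real.exp |⟪ξ ω, Z ω⟫| := by
          have := Real.add_one_le_exp |⟪ξ ω, Z ω⟫|
          linarith
      _ ≤ _ := hω
  -- the product term
  set A : Ω → ℝ := fun ω => nrm (Z ω)^2 * G ω with hA_def
  have iA : Integrable A μ := by
    apply Integrable.mono' (iG.const_mul ((1/(2*σ))^2))
      (((hTmeas.pow_const 2).aestronglyMeasurable).mul iG.aestronglyMeasurable)
    filter_upwards [hZ_bdd] with ω hω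
    show ‖nrm (Z ω)^2 * G ω‖ ≤ (1/(2*σ))^2 * G ω
    rw [Real.norm_eq_abs, abs_of_nonneg (by positivity)]
    apply mul_le_mul_of_nonneg_right _ (Real.exp_nonneg _)
    exact pow_le_pow_left₀ (hT0 _) hω 2
  set K : ℝ := 8 * Real.exp (-(3/2):ℝ) with hK_def
  have hK0 : 0 ≤ K := by positivity
  set c : ℝ := K * σ^2 with hc_def
  have hc0 : 0 ≤ c := by positivity
  set f : Ω → ℝ := fun ω => 1 + (⟪ξ ω, Z ω⟫ + c * A ω) with hf_def
  have if_ : Integrable f μ := (integrable_const 1).add (iY.add (iA.smul c))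
  have hle1 : (fun ω => Real.exp ⟪ξ ω, Z ω⟫) ≤ᵐ[μ] f := by
    filter_upwards [hZ_bdd] with ω hω
    have hk := key_pt (σ := σ) (u := dualNorm nrm (ξ ω)) (t := nrm (Z ω))
      hp1 hσ (hu0 ω) (hT0 _) hω (habs ω)
    have hfω : f ω = 1 + (⟪ξ ω, Z ω⟫ + c * (nrm (Z ω)^2 * G ω)) := by
      rw [hf_def, hA_def]
    have hGω : G ω = Real.exp ((σ^p)⁻¹ * dualNorm nrm (ξ ω) ^ p) := by rw [hG_def]
    rw [hfω, hGω]
    have hcc : c = K * σ^2 := hc_def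
    rw [hcc, hK_def]
    calc Real.exp ⟪ξ ω, Z ω⟫ ≤ _ := hk
      _ = 1 + (⟪ξ ω, Z ω⟫ + 8 * Real.exp (-(3/2):ℝ) * σ^2 *
          (nrm (Z ω)^2 * Real.exp ((σ^p)⁻¹ * dualNorm nrm (ξ ω) ^ p))) := by ring
      _ = _ := by ring
  have hmono := condExp_mono (m := F) iexpY if_ hle1
  -- expansion of the conditional expectation of f
  have e1 : μ[f|F] =ᵐ[μ] (fun _ => (1:ℝ)) + μ[(fun ω => ⟪ξ ω, Z ω⟫ + c * A ω)|F] := by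
    have h := condExp_add (m := F) (μ := μ) (f := fun _ : Ω => (1:ℝ))
      (g := fun ω => ⟪ξ ω, Z ω⟫ + c * A ω) (integrable_const 1) (iY.add (iA.smul c))
    refine Filter.EventuallyEq.trans ?_ (h.trans ?_)
    · apply Filter.EventuallyEq.of_eq; rfl
    · rw [condExp_const hF (1:ℝ)]
  have e2 : μ[(fun ω => ⟪ξ ω, Z ω⟫ + c * A ω)|F] =ᵐ[μ]
      μ[(fun ω => ⟪ξ ω, Z ω⟫)|F] + μ[fun ω => c * A ω|F] :=
    condExp_add (m := F) (μ := μ) (f := fun ω => ⟪ξ ω, Z ω⟫)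
      (g := fun ω => c * A ω) iY (iA.smul c)
  have e3 : μ[fun ω => c * A ω|F] =ᵐ[μ] c • μ[A|F] := condExp_smul (𝕜 := ℝ) c A F
  have e4 : μ[A|F] =ᵐ[μ] (fun ω => nrm (Z ω)^2) * μ[G|F] := by
    have hsm : StronglyMeasurable[F] (fun ω => nrm (Z ω)^2) :=
      Measurable.stronglyMeasurable
        ((((nrm_continuous hnrm_nonneg hnrm_zero hnrm_smul hnrm_tri)).measurable.comp hZ_meas).pow_const 2)
    have hAG : Integrable ((fun ω => nrm (Z ω)^2) * G) μ := iA
    exact condExp_mul_of_stronglyMeasurable_left hsm hAG iG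
  -- conditional expectation of the inner product is zero
  have iξi : ∀ i, Integrable (fun ω => ξ ω i) μ := by
    intro i
    apply Integrable.mono' hξ_int.norm
      ((EuclideanSpace.proj (𝕜 := ℝ) i).continuous.measurable.comp hξ_meas).aestronglyMeasurable
    exact Filter.Eventually.of_forall fun ω => by
      rw [Real.norm_eq_abs]; exact coord_abs_le_norm (ξ ω) i
  have iYi : ∀ i, Integrable (fun ω => Z ω i * ξ ω i) μ := by
    intro i
    apply Integrable.mono' (hξ_int.norm.const_mul (1/(2*σ*m)))
      ((((EuclideanSpace.proj (𝕜 := ℝ) i).continuous.measurable.comp hZmeas').mul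
        ((EuclideanSpace.proj (𝕜 := ℝ) i).continuous.measurable.comp hξ_meas)).aestronglyMeasurable)
    filter_upwards [hZ_bdd] with ω hω
    change ‖Z ω i * ξ ω i‖ ≤ _
    rw [Real.norm_eq_abs, abs_mul]
    have h1 : |Z ω i| ≤ 1/(2*σ*m) := by
      have h2 : m * ‖Z ω‖ ≤ 1/(2*σ) := (hm (Z ω)).trans hω
      have h2' : m * ‖Z ω‖ * (2*σ) ≤ 1 := by
        rw [← le_div_iff₀ (by positivity : (0:ℝ) < 2*σ)]; exact h2
      have h4 : ‖Z ω‖ ≤ 1/(2*σ*m) := by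
        rw [le_div_iff₀ (by positivity : (0:ℝ) < 2*σ*m)]; nlinarith
      exact (coord_abs_le_norm (Z ω) i).trans h4
    exact mul_le_mul h1 (coord_abs_le_norm (ξ ω) i) (abs_nonneg _) (by positivity)
  have hcoord : ∀ i, μ[fun ω => ξ ω i|F] =ᵐ[μ] fun _ => (0:ℝ) := by
    intro i
    symm
    apply ae_eq_condExp_of_forall_setIntegral_eq hF (iξi i)
      (fun s _ _ => (integrable_const (0:ℝ)).integrableOn)
    · intro s hs hμs
      have hset : ∫ ω in s, ξ ω ∂μ = 0 := by
        rw [← setIntegral_condExp hF hξ_int hs]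
        rw [setIntegral_congr_ae (hF s hs) (hmean.mono fun ω h _ => h)]
        simp
      have hcomm : ∫ ω in s, (EuclideanSpace.proj (𝕜 := ℝ) i) (ξ ω) ∂μ
          = (EuclideanSpace.proj (𝕜 := ℝ) i) (∫ ω in s, ξ ω ∂μ) :=
        ContinuousLinearMap.integral_comp_comm _ hξ_int.integrableOn
      have hcoord_eq : (∫ ω in s, ξ ω i ∂μ) = ∫ ω in s, (EuclideanSpace.proj (𝕜 := ℝ) i) (ξ ω) ∂μ := rfl
      rw [hcoord_eq, hcomm, hset]
      simp
    · exact ⟨fun _ => 0, stronglyMeasurable_const, Filter.EventuallyEq.rfl⟩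
  have hYsum : (fun ω => ⟪ξ ω, Z ω⟫) = ∑ i, (fun ω => Z ω i * ξ ω i) := by
    funext ω
    rw [Finset.sum_apply]
    simp only [PiLp.inner_apply, RCLike.inner_apply, conj_trivial]
  have e5 : μ[(fun ω => ⟪ξ ω, Z ω⟫)|F] =ᵐ[μ] fun _ => (0:ℝ) := by
    rw [hYsum]
    refine (condExp_finset_sum (fun i _ => iYi i) F).trans ?_
    have hi : ∀ i : Fin d, μ[fun ω => Z ω i * ξ ω i|F] =ᵐ[μ] fun _ => (0:ℝ) := by
      intro i
      have hzm : StronglyMeasurable[F] (fun ω => Z ω i) :=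
        ((EuclideanSpace.proj (𝕜 := ℝ) i).continuous.measurable.comp hZ_meas).stronglyMeasurable
      refine (condExp_mul_of_stronglyMeasurable_left hzm (iYi i) (iξi i)).trans ?_
      filter_upwards [hcoord i] with ω hω
      simp only [Pi.mul_apply, hω, mul_zero]
    have hall : ∀ᵐ ω ∂μ, ∀ i : Fin d, (μ[fun ω => Z ω i * ξ ω i|F]) ω = 0 :=
      (MeasureTheory.ae_all_iff).2 fun i => hi i
    filter_upwards [hall] with ω hω
    rw [Finset.sum_apply]
    simp [hω]
  -- bound on condexp of G
  have hGle : ∀ᵐ ω ∂μ, (μ[G|F]) ω ≤ Real.exp 1 := by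
    have := hmgf (σ^p)⁻¹ ⟨inv_nonneg.2 hσp.le, le_rfl⟩
    filter_upwards [this] with ω hω
    rw [inv_mul_cancel₀ hσp.ne'] at hω
    exact hω
  -- conclude
  filter_upwards [hmono, e1, e2, e3, e4, e5, hGle] with ω h1 h2 h3 h4 h5 h6 h7
  have ht2 : (0:ℝ) ≤ nrm (Z ω)^2 := by positivity
  have step : (μ[f|F]) ω = 1 + ((μ[(fun ω => ⟪ξ ω, Z ω⟫)|F]) ω + c * ((μ[A|F]) ω)) := by
    rw [h2]
    simp only [Pi.add_apply]
    rw [h3]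
    simp only [Pi.add_apply]
    rw [h4]
    simp only [Pi.smul_apply, smul_eq_mul]
  rw [h6] at step
  rw [h5] at step
  simp only [Pi.mul_apply] at step
  have hGcond : c * (nrm (Z ω)^2 * (μ[G|F]) ω) ≤ c * (nrm (Z ω)^2 * Real.exp 1) :=
    mul_le_mul_of_nonneg_left (mul_le_mul_of_nonneg_left h7 ht2) hc0
  have h6le : c * (nrm (Z ω)^2 * Real.exp 1) ≤ 6 * σ^2 * nrm (Z ω)^2 := by
    rw [hc_def, hK_def]
    nlinarith [aux_const, Real.exp_pos (1:ℝ), sq_nonneg σ, mul_nonneg ht2 (sq_nonneg σ)]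
  have hfinal : (μ[f|F]) ω ≤ 1 + 6 * σ^2 * nrm (Z ω)^2 := by
    rw [step]
    linarith
  calc (μ[fun ω' => Real.exp ⟪ξ ω', Z ω'⟫|F]) ω ≤ (μ[f|F]) ω := h1
    _ ≤ 1 + 6 * σ^2 * nrm (Z ω)^2 := hfinal
    _ ≤ Real.exp (6 * σ^2 * nrm (Z ω)^2) := by
        have := Real.add_one_le_exp (6 * σ^2 * nrm (Z ω)^2)
        linarith
end

section
/- (Unified deterministic inequality for CSMD.) Suppose Assumptions 2 and 3 hold, the step sizes satisfy η_t ≤ 1/max(2L, μ_f) for all t ∈ [T], and define γ_t := η_t ∏_{s=2}^t (1+μ_h η_{s−1})/(1−μ_f η_s). Let w_1 ≥ w_2 ≥ ⋯ ≥ w_T ≥ 0 be a non-increasing sequence, let v_t := w_T γ_T / (Σ_{s=max(t,1)}^T w_s γ_s) > 0 for t ∈ {0}∪[T], and for any fixed x ∈ 𝒳 let z^t := (v_0/v_t)·x + Σ_{s=1}^t ((v_s − v_{s−1})/v_t)·x^s. Then for every realization of ĝ^1,…,ĝ^T (with g^t ∈ ∂f(x^t) the conditional mean and ξ^t = ĝ^t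 − g^t): w_T γ_T v_T (F(x^{T+1}) − F(x)) ≤ w_1 (1 − μ_f η_1) v_0 D_ψ(x, x^1) + Σ_{t=1}^T 2 w_t γ_t η_t v_t (M² + ‖ξ^t‖_*²) + Σ_{t=1}^T w_t γ_t v_{t−1} ⟨ξ^t, z^{t−1} − x^t⟩ + Σ_{t=2}^T (w_t − w_{t−1}) γ_t (η_t^{−1} − μ_f) v_{t−1} D_ψ(z^{t−1}, x^t). -/
open MeasureTheory Real
open scoped RealInnerProductSpace BigOperators

/-!
Tested against any `u ∈ X`, one CSMD step gives
`F(x^{t+1}) - F(u) ≤ (1/η_t - μ_f) D(u, x^t) - (1/η_t + μ_h) D(u, x^{t+1})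
  + 2 η_t (M² + ‖ξ^t‖_*²) + ⟨ξ^t, u - x^t⟩`,
by first-order optimality of the prox step, the three-point identity, smoothness and Young's
inequality. Take `u = z^t`. Since `v_t z^t = v_{t-1} z^{t-1} + (v_t - v_{t-1}) x^t`, convexity of
`D(·, x^t)` and the identity `v_t (z^t - x^t) = v_{t-1} (z^{t-1} - x^t)` move the Bregman and
noise terms back to `z^{t-1}`. With `W = w_T γ_T`, the definition of `v` makes `W F(z^t)` a
potential, `W (F(z^{t+1}) - F(z^t)) ≤ w_t γ_t v_t (F(x^{t+1}) - F(z^t))`, so after weighting the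
one-step bounds by `w_t γ_t v_t` the function values telescope. The Bregman terms telescope
because `γ_t (1/η_t - μ_f) = γ_{t-1} (1/η_{t-1} + μ_h)`, leaving only the increments
`w_t - w_{t-1}`.
-/

open Finset

section DualNorm

variable {d : ℕ} {nrm : EuclideanSpace ℝ (Fin d) → ℝ}
  (hnrm_nonneg : ∀ x, 0 ≤ nrm x)
  (hnrm_zero : ∀ x, nrm x = 0 ↔ x = 0)
  (hnrm_smul : ∀ (c : ℝ) (x : EuclideanSpace ℝ (Fin d)), nrm (c • x) = |c| * nrm x)
  (hnrm_tri : ∀ x y, nrm (x + y) ≤ nrm x + nrm y)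
include hnrm_nonneg hnrm_zero hnrm_smul hnrm_tri

lemma exists_pos_mul_norm_le_nrm : ∃ m > 0, ∀ x, m * ‖x‖ ≤ nrm x := by
  have hcont : Continuous nrm := by
    have hconv : ConvexOn ℝ Set.univ nrm := ⟨convex_univ, fun x _ y _ a b ha hb _ => by
      simpa [hnrm_smul, abs_of_nonneg ha, abs_of_nonneg hb] using hnrm_tri (a • x) (b • y)⟩
    simpa [continuousOn_univ] using hconv.continuousOn_interior
  rcases subsingleton_or_nontrivial (EuclideanSpace ℝ (Fin d)) with hsub | hnt
  · exact ⟨1, one_pos, fun x => by simp [Subsingleton.elim x 0, hnrm_nonneg]⟩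
  obtain ⟨y, hy, hmin⟩ := (isCompact_sphere 0 1).exists_isMinOn
    (NormedSpace.sphere_nonempty.2 zero_le_one) hcont.continuousOn
  have hy0 : y ≠ 0 := ne_zero_of_mem_unit_sphere ⟨y, hy⟩
  refine ⟨nrm y, (hnrm_nonneg y).lt_of_ne (fun h => hy0 ((hnrm_zero y).1 h.symm)), fun x => ?_⟩
  rcases eq_or_ne x 0 with rfl | hx
  · simp [hnrm_nonneg]
  have hxn : 0 < ‖x‖ := norm_pos_iff.2 hx
  have : nrm y ≤ nrm (‖x‖⁻¹ • x) := hmin (by simp [norm_smul, hxn.ne'])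
  rw [hnrm_smul, abs_of_pos (inv_pos.2 hxn)] at this
  calc nrm y * ‖x‖ ≤ ‖x‖⁻¹ * nrm x * ‖x‖ := by gcongr
    _ = nrm x := by field_simp

lemma inner_le_dualNorm_mul (g y : EuclideanSpace ℝ (Fin d)) :
    ⟪g, y⟫ ≤ dualNorm nrm g * nrm y := by
  obtain ⟨m, hm, hmle⟩ := exists_pos_mul_norm_le_nrm hnrm_nonneg hnrm_zero hnrm_smul hnrm_tri
  have hbdd : BddAbove {r : ℝ | ∃ x, nrm x ≤ 1 ∧ r = ⟪g, x⟫} := by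
    refine ⟨‖g‖ / m, ?_⟩
    rintro _ ⟨x, hx, rfl⟩
    have : ‖x‖ ≤ 1 / m := by rw [le_div_iff₀ hm]; linarith [hmle x]
    calc ⟪g, x⟫ ≤ ‖g‖ * ‖x‖ := real_inner_le_norm g x
      _ ≤ ‖g‖ * (1 / m) := by gcongr
      _ = ‖g‖ / m := by ring
  rcases eq_or_ne y 0 with rfl | hy
  · simp [(hnrm_zero 0).2 rfl]
  have hny : 0 < nrm y := (hnrm_nonneg y).lt_of_ne (fun h => hy ((hnrm_zero y).1 h.symm))
  have := le_csSup hbdd ⟨(nrm y)⁻¹ • y, by rw [hnrm_smul, abs_of_pos (inv_pos.2 hny),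
    inv_mul_cancel₀ hny.ne'], rfl⟩
  rw [real_inner_smul_right] at this
  calc ⟪g, y⟫ = (nrm y)⁻¹ * ⟪g, y⟫ * nrm y := by field_simp
    _ ≤ dualNorm nrm g * nrm y := by gcongr; exact this

end DualNorm

section Bregman

variable {d : ℕ} {X : Set (EuclideanSpace ℝ (Fin d))} {ψ : EuclideanSpace ℝ (Fin d) → ℝ}
  {gψ : EuclideanSpace ℝ (Fin d) → EuclideanSpace ℝ (Fin d)}

lemma breg_three_point (u y x : EuclideanSpace ℝ (Fin d)) :
    breg ψ gψ u x - breg ψ gψ y x - breg ψ gψ u y = ⟪gψ y - gψ x, u - y⟫ := by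
  have : ⟪gψ x, u - x⟫ = ⟪gψ x, u - y⟫ + ⟪gψ x, y - x⟫ := by
    rw [← inner_add_right, sub_add_sub_cancel]
  simp only [breg, this, inner_sub_left]
  ring

lemma breg_nonneg {nrm : EuclideanSpace ℝ (Fin d) → ℝ}
    (hψ_sc : ∀ x ∈ X, ∀ y ∈ X, 1 / 2 * nrm (x - y) ^ 2 ≤ breg ψ gψ x y)
    {x y : EuclideanSpace ℝ (Fin d)} (hx : x ∈ X) (hy : y ∈ X) : 0 ≤ breg ψ gψ x y :=
  (by positivity : (0 : ℝ) ≤ 1 / 2 * nrm (x - y) ^ 2).trans (hψ_sc x hx y hy)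

lemma add_mul_breg_le (hbreg : ∀ x ∈ X, ∀ y ∈ X, 0 ≤ breg ψ gψ x y) {a b : ℝ}
    (ha : 0 ≤ a) (hb : 0 ≤ b) {z z' y : EuclideanSpace ℝ (Fin d)} (hz : z ∈ X)
    (hz' : z' ∈ X) (hy : y ∈ X) (hcomb : (a + b) • z = a • z' + b • y) :
    (a + b) * breg ψ gψ z y ≤ a * breg ψ gψ z' y := by
  have hsum : a • (z' - z) + b • (y - z) = 0 := by
    rw [smul_sub, smul_sub, ← sub_eq_zero.2 hcomb.symm]; module
  have hinner : a * ⟪gψ z - gψ y, z' - z⟫ + b * ⟪gψ z - gψ y, y - z⟫ = 0 := by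
    rw [← real_inner_smul_right, ← real_inner_smul_right, ← inner_add_right, hsum,
      inner_zero_right]
  have hyy : breg ψ gψ y y = 0 := by simp [breg]
  have key : a * breg ψ gψ z' y - (a + b) * breg ψ gψ z y
      = a * breg ψ gψ z' z + b * breg ψ gψ y z := by
    linear_combination a * breg_three_point (ψ := ψ) (gψ := gψ) z' z y
      + b * breg_three_point (ψ := ψ) (gψ := gψ) y z y + hinner - b * hyy
  linarith [mul_nonneg ha (hbreg z' hz' z hz), mul_nonneg hb (hbreg y hy z hz)]

end Bregman

section Prox

variable {d : ℕ} {X : Set (EuclideanSpace ℝ (Fin d))} {ψ : EuclideanSpace ℝ (Fin d) → ℝ}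
  {gψ : EuclideanSpace ℝ (Fin d) → EuclideanSpace ℝ (Fin d)}

lemma neg_mem_subgrad_of_isMinOn_add (hX : Convex ℝ X) {φ s : EuclideanSpace ℝ (Fin d) → ℝ}
    (hφ : ConvexOn ℝ X φ) {G p : EuclideanSpace ℝ (Fin d)} (hs : HasGradientAt s G p)
    (hp : p ∈ X) (hmin : IsMinOn (φ + s) X p) : -G ∈ subgrad X φ p := by
  intro u hu
  set k : ℝ → ℝ := fun l => l * (φ u - φ p) + s (p + l • (u - p))
  have hk : HasDerivAt k (φ u - φ p + ⟪G, u - p⟫) 0 := by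
    have hline : HasDerivAt (fun l : ℝ => p + l • (u - p)) (u - p) 0 := by
      simpa using ((hasDerivAt_id (0 : ℝ)).smul_const (u - p)).const_add p
    have hs' : HasFDerivAt s (InnerProductSpace.toDual ℝ _ G) (p + (0 : ℝ) • (u - p)) := by
      simpa using hs.hasFDerivAt
    have h := ((hasDerivAt_id (0 : ℝ)).mul_const (φ u - φ p)).add (hs'.comp_hasDerivAt 0 hline)
    simp only [id, one_mul, InnerProductSpace.toDual_apply_apply] at h
    exact h
  -- `k` bounds `φ + s` along the segment from `p` to `u`, by convexity of `φ`.
  have hkmin : IsLocalMinOn k (Set.Icc 0 1) 0 := by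
    refine IsMinOn.localize fun l ⟨hl0, hl1⟩ => ?_
    have hseg : p + l • (u - p) = (1 - l) • p + l • u := by module
    have hmem : p + l • (u - p) ∈ X := hseg ▸ hX hp hu (by linarith) hl0 (by ring)
    have hconv : φ (p + l • (u - p)) ≤ (1 - l) * φ p + l * φ u := by
      simpa [hseg] using hφ.2 hp hu (by linarith : 0 ≤ 1 - l) hl0 (by ring)
    have hle : φ p + s p ≤ φ (p + l • (u - p)) + s (p + l • (u - p)) := hmin hmem
    show k 0 ≤ k l
    simp only [k, zero_mul, zero_smul, add_zero, zero_add]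
    linarith
  have := hkmin.hasFDerivWithinAt_nonneg hk.hasFDerivAt.hasFDerivWithinAt
    (mem_posTangentConeAt_of_segment_subset (by simp [segment_eq_Icc]) : (1 : ℝ) ∈ _)
  simp only [ContinuousLinearMap.toSpanSingleton_apply, one_smul] at this
  rw [inner_neg_left]
  linarith

lemma hasGradientAt_prox_model {ghat xb p : EuclideanSpace ℝ (Fin d)} (η : ℝ)
    (hψ : HasGradientAt ψ (gψ p) p) :
    HasGradientAt (fun u => ⟪ghat, u - xb⟫ + breg ψ gψ u xb / η)
      (ghat + η⁻¹ • (gψ p - gψ xb)) p := by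
  have hlin : ∀ c : EuclideanSpace ℝ (Fin d),
      HasFDerivAt (fun u => ⟪c, u - xb⟫) (innerSL ℝ c) p := fun c =>
    (innerSL ℝ c).hasFDerivAt.comp p ((hasFDerivAt_id p).sub_const xb)
  have h := (hlin ghat).add
    (((hψ.hasFDerivAt.sub_const (ψ xb)).sub (hlin (gψ xb))).const_smul η⁻¹)
  rw [hasGradientAt_iff_hasFDerivAt]
  refine (h.congr_fderiv ?_).congr_of_eventuallyEq (.of_forall fun u => ?_)
  · ext w
    simp
  · simp [breg, div_eq_inv_mul]

lemma prox_three_point_le (hX : Convex ℝ X) {h : EuclideanSpace ℝ (Fin d) → ℝ}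
    (hh : ConvexOn ℝ X h) (hψ : ∀ y, HasGradientAt ψ (gψ y) y) {μh : ℝ}
    (hh_sc : ∀ x ∈ X, ∀ y ∈ X, ∀ g ∈ subgrad X h y,
      μh * breg ψ gψ x y ≤ h x - h y - ⟪g, x - y⟫)
    {ghat xb xp u : EuclideanSpace ℝ (Fin d)} {η : ℝ} (hxp : xp ∈ X) (hu : u ∈ X)
    (hmin : IsMinOn (fun u => h u + ⟪ghat, u - xb⟫ + breg ψ gψ u xb / η) X xp) :
    h xp + ⟪ghat, xp - xb⟫ + η⁻¹ * breg ψ gψ xp xb + (μh + η⁻¹) * breg ψ gψ u xp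
      ≤ h u + ⟪ghat, u - xb⟫ + η⁻¹ * breg ψ gψ u xb := by
  have hsub := neg_mem_subgrad_of_isMinOn_add hX hh (hasGradientAt_prox_model η (hψ xp)) hxp
    (isMinOn_iff.2 fun y hy => by
      simpa only [Pi.add_apply, add_assoc] using isMinOn_iff.1 hmin y hy)
  have hsc := hh_sc u hu xp hxp _ hsub
  have hghat : ⟪ghat, u - xp⟫ = ⟪ghat, u - xb⟫ - ⟪ghat, xp - xb⟫ := by
    rw [← inner_sub_right, sub_sub_sub_cancel_right]
  simp only [inner_neg_left, inner_add_left, real_inner_smul_left, hghat] at hsc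
  linear_combination hsc - η⁻¹ * breg_three_point (ψ := ψ) (gψ := gψ) u xp xb

end Prox

lemma young_le {L M s n η : ℝ} (hη : 0 < η) (hLη : 2 * L * η ≤ 1) :
    L / 2 * n ^ 2 + (M + s) * n - η⁻¹ * (1 / 2 * n ^ 2) ≤ 2 * η * (M ^ 2 + s ^ 2) := by
  have hscaled : 4 * η * (L / 2 * n ^ 2 + (M + s) * n - η⁻¹ * (1 / 2 * n ^ 2))
      ≤ 4 * η * (2 * η * (M ^ 2 + s ^ 2)) := by
    have : 4 * η * (η⁻¹ * (1 / 2 * n ^ 2)) = 2 * n ^ 2 := by field_simp; ring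
    nlinarith [sq_nonneg (2 * η * (M + s) - n), sq_nonneg (2 * η * (M - s)),
      mul_nonneg (sub_nonneg.2 hLη) (sq_nonneg n)]
  exact le_of_mul_le_mul_left hscaled (by positivity)

section Step

variable {d : ℕ} {X : Set (EuclideanSpace ℝ (Fin d))} {nrm : EuclideanSpace ℝ (Fin d) → ℝ}
  {f h ψ : EuclideanSpace ℝ (Fin d) → ℝ}
  {gψ : EuclideanSpace ℝ (Fin d) → EuclideanSpace ℝ (Fin d)} {μf μh L M : ℝ}
  (hX : Convex ℝ X)
  (hnrm_nonneg : ∀ x, 0 ≤ nrm x)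
  (hnrm_zero : ∀ x, nrm x = 0 ↔ x = 0)
  (hnrm_smul : ∀ (c : ℝ) (x : EuclideanSpace ℝ (Fin d)), nrm (c • x) = |c| * nrm x)
  (hnrm_tri : ∀ x y, nrm (x + y) ≤ nrm x + nrm y)
  (hh : ConvexOn ℝ X h) (hψ : ∀ y, HasGradientAt ψ (gψ y) y)
  (hψ_sc : ∀ x ∈ X, ∀ y ∈ X, 1 / 2 * nrm (x - y) ^ 2 ≤ breg ψ gψ x y)
  (hf_sc : ∀ x ∈ X, ∀ y ∈ X, ∀ g ∈ subgrad X f y,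
    μf * breg ψ gψ x y ≤ f x - f y - ⟪g, x - y⟫)
  (hh_sc : ∀ x ∈ X, ∀ y ∈ X, ∀ g ∈ subgrad X h y,
    μh * breg ψ gψ x y ≤ h x - h y - ⟪g, x - y⟫)
  (hsmooth : ∀ x ∈ X, ∀ y ∈ X, ∀ g ∈ subgrad X f y,
    f x - f y - ⟪g, x - y⟫ ≤ L / 2 * nrm (x - y) ^ 2 + M * nrm (x - y))
include hX hnrm_nonneg hnrm_zero hnrm_smul hnrm_tri hh hψ hψ_sc hf_sc hh_sc hsmooth

lemma csmd_step_le {ghat g xb xp u : EuclideanSpace ℝ (Fin d)} {η : ℝ} (hη : 0 < η)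
    (hLη : 2 * L * η ≤ 1) (hxb : xb ∈ X) (hxp : xp ∈ X) (hu : u ∈ X)
    (hg : g ∈ subgrad X f xb)
    (hmin : IsMinOn (fun u => h u + ⟪ghat, u - xb⟫ + breg ψ gψ u xb / η) X xp) :
    f xp + h xp - (f u + h u) ≤
      (η⁻¹ - μf) * breg ψ gψ u xb - (η⁻¹ + μh) * breg ψ gψ u xp
      + 2 * η * (M ^ 2 + dualNorm nrm (ghat - g) ^ 2) + ⟪ghat - g, u - xb⟫ := by
  have hprox := prox_three_point_le hX hh hψ hh_sc hxp hu hmin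
  have hsm := hsmooth xp hxp xb hxb g hg
  have hsc := hf_sc u hu xb hxb g hg
  have hnoise : ⟪ghat - g, xb - xp⟫ ≤ dualNorm nrm (ghat - g) * nrm (xp - xb) := by
    have hsymm : nrm (xb - xp) = nrm (xp - xb) := by
      rw [← neg_sub, ← neg_one_smul ℝ, hnrm_smul, abs_neg, abs_one, one_mul]
    rw [← hsymm]
    exact inner_le_dualNorm_mul hnrm_nonneg hnrm_zero hnrm_smul hnrm_tri _ _
  have hbreg : η⁻¹ * (1 / 2 * nrm (xp - xb) ^ 2) ≤ η⁻¹ * breg ψ gψ xp xb := by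
    gcongr; exact hψ_sc xp hxp xb hxb
  have hyoung := young_le (M := M) (s := dualNorm nrm (ghat - g)) (n := nrm (xp - xb)) hη hLη
  have hξ₁ : ⟪ghat - g, u - xb⟫ = ⟪ghat, u - xb⟫ - ⟪g, u - xb⟫ :=
    inner_sub_left _ _ _
  have hξ₂ : ⟪ghat - g, xb - xp⟫ = ⟪g, xp - xb⟫ - ⟪ghat, xp - xb⟫ := by
    rw [← neg_sub xp xb, inner_neg_right, inner_sub_left]; ring
  linarith

lemma csmd_averaged_step_le {ghat g xb xp z z' : EuclideanSpace ℝ (Fin d)} {η w γ v v' : ℝ}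
    (hη : 0 < η) (hLη : 2 * L * η ≤ 1) (hμfη : μf * η ≤ 1) (hwγ : 0 ≤ w * γ)
    (hv' : 0 ≤ v') (hvv' : v' ≤ v) (hxb : xb ∈ X) (hxp : xp ∈ X) (hz : z ∈ X)
    (hz' : z' ∈ X) (hg : g ∈ subgrad X f xb)
    (hmin : IsMinOn (fun u => h u + ⟪ghat, u - xb⟫ + breg ψ gψ u xb / η) X xp)
    (hcomb : v • z = v' • z' + (v - v') • xb) :
    w * γ * v * (f xp + h xp - (f z + h z)) ≤
      (w * γ * (η⁻¹ - μf) * v' * breg ψ gψ z' xb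
        - w * γ * (η⁻¹ + μh) * v * breg ψ gψ z xp)
      + 2 * w * γ * η * v * (M ^ 2 + dualNorm nrm (ghat - g) ^ 2)
      + w * γ * v' * ⟪ghat - g, z' - xb⟫ := by
  have hstep := csmd_step_le hX hnrm_nonneg hnrm_zero hnrm_smul hnrm_tri hh hψ hψ_sc hf_sc hh_sc
    hsmooth hη hLη hxb hxp hz hg hmin
  have hbreg : v * breg ψ gψ z xb ≤ v' * breg ψ gψ z' xb := by
    simpa using add_mul_breg_le (fun x hx y hy => breg_nonneg hψ_sc hx hy) hv'
      (sub_nonneg.2 hvv') hz hz' hxb (by rw [add_sub_cancel]; exact hcomb)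
  have hnoise : v * ⟪ghat - g, z - xb⟫ = v' * ⟪ghat - g, z' - xb⟫ := by
    rw [← real_inner_smul_right, ← real_inner_smul_right, smul_sub, smul_sub, hcomb]
    congr 1
    module
  have hc : 0 ≤ w * γ * (η⁻¹ - μf) := by
    have : μf ≤ η⁻¹ := by rwa [← one_div, le_div_iff₀ hη]
    exact mul_nonneg hwγ (sub_nonneg.2 this)
  have := mul_le_mul_of_nonneg_left hstep (mul_nonneg hwγ (hv'.trans hvv'))
  nlinarith [mul_le_mul_of_nonneg_left hbreg hc]

end Step

section Weights

variable {a v : ℕ → ℝ} {T : ℕ}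

lemma weight_zero_eq_weight_one (hv : ∀ t ≤ T, v t = a T / ∑ s ∈ Icc (max t 1) T, a s)
    (hT : 1 ≤ T) : v 0 = v 1 := by
  rw [hv 0 (Nat.zero_le T), hv 1 hT]
  rfl

variable (hv : ∀ t ≤ T, v t = a T / ∑ s ∈ Icc (max t 1) T, a s)
  (hv_pos : ∀ t ≤ T, 0 < v t)
include hv hv_pos

lemma mul_tail_sum_eq {t : ℕ} (ht : t ≤ T) : v t * ∑ s ∈ Icc (max t 1) T, a s = a T := by
  have hS : ∑ s ∈ Icc (max t 1) T, a s ≠ 0 := fun h0 => by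
    simpa [hv t ht, h0] using hv_pos t ht
  rw [hv t ht, div_mul_cancel₀ _ hS]

lemma last_ne_zero_and_weight_last_eq_one (hT : 1 ≤ T) : a T ≠ 0 ∧ v T = 1 := by
  have hvT := hv T le_rfl
  rw [max_eq_left hT, Icc_self, sum_singleton] at hvT
  have haT : a T ≠ 0 := fun h0 => by
    simpa [hvT, h0] using hv_pos T le_rfl
  exact ⟨haT, hvT.trans (div_self haT)⟩

lemma mul_weight_succ_sub {t : ℕ} (ht : 1 ≤ t) (htT : t < T) :
    a T * (v (t + 1) - v t) = a t * v t * v (t + 1) := by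
  have h₀ := mul_tail_sum_eq hv hv_pos htT.le
  have h₁ := mul_tail_sum_eq hv hv_pos (t := t + 1) htT
  rw [max_eq_left ht, Icc_eq_cons_Ioc htT.le, sum_cons, ← Icc_add_one_left_eq_Ioc] at h₀
  rw [max_eq_left (by omega)] at h₁
  linear_combination v t * h₁ - v (t + 1) * h₀

lemma weight_le_succ (ha : ∀ t ∈ Icc 1 T, 0 ≤ a t) {t : ℕ} (htT : t < T) :
    v t ≤ v (t + 1) := by
  rcases Nat.eq_zero_or_pos t with rfl | ht
  · exact (weight_zero_eq_weight_one hv (by omega)).le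
  have haT : 0 < a T := (ha T (mem_Icc.2 ⟨by omega, le_rfl⟩)).lt_of_ne'
    (last_ne_zero_and_weight_last_eq_one hv hv_pos (by omega)).1
  have hprod : 0 ≤ a t * v t * v (t + 1) := by
    have := ha t (mem_Icc.2 ⟨ht, htT.le⟩)
    have := hv_pos t htT.le
    have := hv_pos (t + 1) htT
    positivity
  rw [← mul_weight_succ_sub hv hv_pos ht htT] at hprod
  exact sub_nonneg.1 ((mul_nonneg_iff_of_pos_left haT).1 hprod)

end Weights

section Averages

variable {E : Type*} [AddCommGroup E] [Module ℝ E] {X : Set E}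

lemma eq_div_smul_add_div_smul {a b : ℝ} (hab : a + b ≠ 0) {z z' y : E}
    (h : (a + b) • z = a • z' + b • y) : z = (a / (a + b)) • z' + (b / (a + b)) • y := by
  rw [div_eq_inv_mul, div_eq_inv_mul, mul_smul, mul_smul, ← smul_add, ← h, smul_smul,
    inv_mul_cancel₀ hab, one_smul]

lemma Convex.mem_of_add_smul_eq (hX : Convex ℝ X) {a b : ℝ} (ha : 0 ≤ a) (hb : 0 ≤ b)
    (hab : 0 < a + b) {z z' y : E} (hz' : z' ∈ X) (hy : y ∈ X)
    (h : (a + b) • z = a • z' + b • y) : z ∈ X := by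
  rw [eq_div_smul_add_div_smul hab.ne' h]
  exact hX hz' hy (by positivity) (by positivity) (by field_simp)

lemma ConvexOn.add_mul_le_of_add_smul_eq {F : E → ℝ} (hF : ConvexOn ℝ X F) {a b : ℝ}
    (ha : 0 ≤ a) (hb : 0 ≤ b) (hab : 0 < a + b) {z z' y : E} (hz' : z' ∈ X) (hy : y ∈ X)
    (h : (a + b) • z = a • z' + b • y) : (a + b) * F z ≤ a * F z' + b * F y := by
  have := hF.2 hz' hy (by positivity : 0 ≤ a / (a + b)) (by positivity : 0 ≤ b / (a + b))
    (by field_simp)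
  rw [← eq_div_smul_add_div_smul hab.ne' h, smul_eq_mul, smul_eq_mul] at this
  calc (a + b) * F z ≤ (a + b) * (a / (a + b) * F z' + b / (a + b) * F y) := by gcongr
    _ = a * F z' + b * F y := by field_simp

variable {v : ℕ → ℝ} {T : ℕ} {x z : ℕ → E} {x₀ : E}
  (hv_pos : ∀ t ≤ T, 0 < v t)
  (hz : ∀ t ≤ T,
    z t = (v 0 / v t) • x₀ + ∑ s ∈ Icc 1 t, ((v s - v (s - 1)) / v t) • x s)
include hv_pos hz

lemma smul_average_eq {t : ℕ} (ht : t ≤ T) :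
    v t • z t = v 0 • x₀ + ∑ s ∈ Icc 1 t, (v s - v (s - 1)) • x s := by
  have hvt := (hv_pos t ht).ne'
  rw [hz t ht, smul_add, smul_smul, Finset.smul_sum, mul_div_cancel₀ _ hvt]
  simp_rw [smul_smul, mul_div_cancel₀ _ hvt]

lemma average_zero : z 0 = x₀ := by
  simpa [(hv_pos 0 (Nat.zero_le T)).ne'] using smul_average_eq hv_pos hz (Nat.zero_le T)

lemma smul_average_succ {t : ℕ} (ht : t < T) :
    v (t + 1) • z (t + 1) = v t • z t + (v (t + 1) - v t) • x (t + 1) := by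
  rw [smul_average_eq hv_pos hz ht, smul_average_eq hv_pos hz ht.le,
    sum_Icc_succ_top (Nat.le_add_left 1 t), Nat.add_sub_cancel, add_assoc]

lemma average_mem (hX : Convex ℝ X) (hv_mono : ∀ t < T, v t ≤ v (t + 1)) (hx₀ : x₀ ∈ X)
    (hx : ∀ t ∈ Icc 1 T, x t ∈ X) {t : ℕ} (ht : t ≤ T) : z t ∈ X := by
  induction t with
  | zero => exact average_zero hv_pos hz ▸ hx₀
  | succ t ih =>
    refine hX.mem_of_add_smul_eq (hv_pos t (by omega)).le (sub_nonneg.2 (hv_mono t ht))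
      (by simpa using hv_pos (t + 1) ht) (ih (by omega)) (hx (t + 1) (mem_Icc.2 ⟨by omega, ht⟩))
      ?_
    rw [add_sub_cancel, smul_average_succ hv_pos hz ht]

end Averages

lemma ConvexOn.mul_sub_le_sum_sub_average {E : Type*} [AddCommGroup E] [Module ℝ E]
    {X : Set E} {F : E → ℝ} (hF : ConvexOn ℝ X F) {a v : ℕ → ℝ} {T : ℕ} (hT : 1 ≤ T)
    (ha : ∀ t ∈ Icc 1 T, 0 ≤ a t)
    (hv : ∀ t ≤ T, v t = a T / ∑ s ∈ Icc (max t 1) T, a s) (hv_pos : ∀ t ≤ T, 0 < v t)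
    {x z : ℕ → E} {x₀ : E}
    (hz : ∀ t ≤ T,
      z t = (v 0 / v t) • x₀ + ∑ s ∈ Icc 1 t, ((v s - v (s - 1)) / v t) • x s)
    (hx₀ : x₀ ∈ X) (hx : ∀ t ∈ Icc 1 T, x t ∈ X) :
    a T * v T * (F (x (T + 1)) - F x₀)
      ≤ ∑ t ∈ Icc 1 T, a t * v t * (F (x (t + 1)) - F (z t)) := by
  obtain ⟨haT, hvT⟩ := last_ne_zero_and_weight_last_eq_one hv hv_pos hT
  have haT_pos : 0 < a T := (ha T (mem_Icc.2 ⟨hT, le_rfl⟩)).lt_of_ne' haT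
  have hmono : ∀ t < T, v t ≤ v (t + 1) := fun t ht => weight_le_succ hv hv_pos ha ht
  have hz1 : z 1 = x₀ := by
    have h := smul_average_succ hv_pos hz hT
    rw [average_zero hv_pos hz, ← weight_zero_eq_weight_one hv hT, sub_self, zero_smul,
      add_zero] at h
    exact smul_right_injective E (hv_pos 0 (Nat.zero_le T)).ne' h
  have hstep : ∀ t ∈ Ico 1 T,
      a T * F (z (t + 1)) - a T * F (z t) ≤ a t * v t * (F (x (t + 1)) - F (z t)) := by
    intro t ht
    obtain ⟨ht1, htT⟩ := mem_Ico.1 ht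
    have hconv := hF.add_mul_le_of_add_smul_eq (hv_pos t htT.le).le (sub_nonneg.2 (hmono t htT))
      (by simpa using hv_pos (t + 1) htT) (average_mem hv_pos hz hF.1 hmono hx₀ hx htT.le)
      (hx (t + 1) (mem_Icc.2 ⟨by omega, htT⟩))
      (by rw [add_sub_cancel]; exact smul_average_succ hv_pos hz htT)
    rw [add_sub_cancel] at hconv
    have key : v (t + 1) * (a t * v t * (F (x (t + 1)) - F (z t)))
          - v (t + 1) * (a T * F (z (t + 1)) - a T * F (z t))
        = a T * (v t * F (z t) + (v (t + 1) - v t) * F (x (t + 1))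
          - v (t + 1) * F (z (t + 1))) := by
      linear_combination (F (z t) - F (x (t + 1))) * mul_weight_succ_sub hv hv_pos ht1 htT
    refine le_of_mul_le_mul_left ?_ (hv_pos (t + 1) htT)
    nlinarith [mul_nonneg haT_pos.le (sub_nonneg.2 hconv)]
  calc a T * v T * (F (x (T + 1)) - F x₀)
      = (a T * F (z T) - a T * F (z 1)) + a T * v T * (F (x (T + 1)) - F (z T)) := by
        rw [hvT, hz1]; ring
    _ = ∑ t ∈ Ico 1 T, (a T * F (z (t + 1)) - a T * F (z t))
          + a T * v T * (F (x (T + 1)) - F (z T)) := by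
        rw [sum_Ico_sub (fun t => a T * F (z t)) hT]
    _ ≤ ∑ t ∈ Ico 1 T, a t * v t * (F (x (t + 1)) - F (z t))
          + a T * v T * (F (x (T + 1)) - F (z T)) := by
        gcongr with t ht; exact hstep t ht
    _ = ∑ t ∈ Icc 1 T, a t * v t * (F (x (t + 1)) - F (z t)) := by
        rw [← Ico_add_one_right_eq_Icc, sum_Ico_succ_top hT]

lemma sum_Icc_sub_shift {M : Type*} [AddCommGroup M] (e b : ℕ → M) {T : ℕ} (hT : 1 ≤ T) :
    ∑ t ∈ Icc 1 T, (e t - b t) = e 1 + ∑ t ∈ Icc 2 T, (e t - b (t - 1)) - b T := by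
  induction T, hT using Nat.le_induction with
  | base => simp
  | succ T hT ih =>
    rw [sum_Icc_succ_top (by omega), sum_Icc_succ_top (by omega), ih, Nat.add_sub_cancel]
    abel

section StepSizes

variable {η γ : ℕ → ℝ} {μf μh : ℝ}
  (hγ : ∀ t, γ t = η t * ∏ s ∈ Icc 2 t, (1 + μh * η (s - 1)) / (1 - μf * η s))
include hγ

lemma gamma_nonneg (hμh : 0 ≤ μh) {T : ℕ} (hη : ∀ t ∈ Icc 1 T, 0 < η t)
    (hμfη : ∀ t ∈ Icc 1 T, μf * η t ≤ 1) {t : ℕ} (ht : t ∈ Icc 1 T) : 0 ≤ γ t := by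
  rw [hγ]
  refine mul_nonneg (hη t ht).le (prod_nonneg fun s hs => div_nonneg ?_ ?_)
  · have := hη (s - 1) (by simp at hs ht ⊢; omega)
    positivity
  · exact sub_nonneg.2 (hμfη s (by simp at hs ht ⊢; omega))

lemma one_sub_mul_ne_zero_of_gamma_ne_zero {T : ℕ} (hγT : γ T ≠ 0) {s : ℕ}
    (hs : s ∈ Icc 2 T) : 1 - μf * η s ≠ 0 := fun h0 =>
  hγT (by rw [hγ, prod_eq_zero hs (by rw [h0, div_zero]), mul_zero])

lemma gamma_one : γ 1 = η 1 := by simp [hγ]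

lemma gamma_succ_mul {t : ℕ} (ht : 1 ≤ t) (hη : η t ≠ 0) (hη' : η (t + 1) ≠ 0)
    (hden : 1 - μf * η (t + 1) ≠ 0) :
    γ (t + 1) * ((η (t + 1))⁻¹ - μf) = γ t * ((η t)⁻¹ + μh) := by
  rw [hγ (t + 1), hγ t, prod_Icc_succ_top (by omega), Nat.add_sub_cancel]
  generalize ∏ s ∈ Icc 2 t, (1 + μh * η (s - 1)) / (1 - μf * η s) = Q
  have e : η (t + 1) * ((η (t + 1))⁻¹ - μf) = 1 - μf * η (t + 1) := by field_simp
  calc η (t + 1) * (Q * ((1 + μh * η t) / (1 - μf * η (t + 1)))) * ((η (t + 1))⁻¹ - μf)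
      = Q * (1 + μh * η t)
          * (η (t + 1) * ((η (t + 1))⁻¹ - μf) / (1 - μf * η (t + 1))) := by ring
    _ = η t * Q * ((η t)⁻¹ + μh) := by
        rw [e, div_self hden]
        field_simp

lemma bregman_weight_telescope {w v B : ℕ → ℝ} {T : ℕ} (hT : 1 ≤ T)
    (hη : ∀ t ∈ Icc 1 T, 0 < η t) (hγT : γ T ≠ 0)
    (hlast : 0 ≤ w T * γ T * ((η T)⁻¹ + μh) * v T * B (T + 1)) :
    ∑ t ∈ Icc 1 T, (w t * γ t * ((η t)⁻¹ - μf) * v (t - 1) * B t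
        - w t * γ t * ((η t)⁻¹ + μh) * v t * B (t + 1))
      ≤ w 1 * (1 - μf * η 1) * v 0 * B 1
        + ∑ t ∈ Icc 2 T, (w t - w (t - 1)) * γ t * ((η t)⁻¹ - μf) * v (t - 1) * B t := by
  rw [sum_Icc_sub_shift (fun t => w t * γ t * ((η t)⁻¹ - μf) * v (t - 1) * B t)
    (fun t => w t * γ t * ((η t)⁻¹ + μh) * v t * B (t + 1)) hT]
  have hfirst : w 1 * γ 1 * ((η 1)⁻¹ - μf) * v (1 - 1) * B 1
      = w 1 * (1 - μf * η 1) * v 0 * B 1 := by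
    have := (hη 1 (mem_Icc.2 ⟨le_rfl, hT⟩)).ne'
    rw [gamma_one hγ]
    field_simp
  have hshift : ∀ t ∈ Icc 2 T,
      w t * γ t * ((η t)⁻¹ - μf) * v (t - 1) * B t
        - w (t - 1) * γ (t - 1) * ((η (t - 1))⁻¹ + μh) * v (t - 1) * B (t - 1 + 1)
      = (w t - w (t - 1)) * γ t * ((η t)⁻¹ - μf) * v (t - 1) * B t := by
    intro t ht
    obtain ⟨s, rfl⟩ : ∃ s, t = s + 1 := ⟨t - 1, by simp at ht; omega⟩
    have hs := mem_Icc.1 ht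
    simp only [Nat.add_sub_cancel]
    have := gamma_succ_mul hγ (by omega) (hη s (mem_Icc.2 ⟨by omega, by omega⟩)).ne'
      (hη (s + 1) (mem_Icc.2 ⟨by omega, hs.2⟩)).ne'
      (one_sub_mul_ne_zero_of_gamma_ne_zero hγ hγT ht)
    linear_combination (w s * v s * B (s + 1)) * this
  rw [hfirst, sum_congr rfl hshift]
  linarith

end StepSizes

theorem csmd_unified_deterministic_general
    {d : ℕ}
    (X : Set (EuclideanSpace ℝ (Fin d))) (hXcv : Convex ℝ X)
    (nrm : EuclideanSpace ℝ (Fin d) → ℝ)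
    (hnrm_nonneg : ∀ x, 0 ≤ nrm x)
    (hnrm_zero : ∀ x, nrm x = 0 ↔ x = 0)
    (hnrm_smul : ∀ (c : ℝ) (x : EuclideanSpace ℝ (Fin d)), nrm (c • x) = |c| * nrm x)
    (hnrm_tri : ∀ x y, nrm (x + y) ≤ nrm x + nrm y)
    (f h : EuclideanSpace ℝ (Fin d) → ℝ)
    (hf_cv : ConvexOn ℝ Set.univ f) (hh_cv : ConvexOn ℝ Set.univ h)
    (ψ : EuclideanSpace ℝ (Fin d) → ℝ) (gψ : EuclideanSpace ℝ (Fin d) → EuclideanSpace ℝ (Fin d))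
    (hψ_diff : ∀ y, HasGradientAt ψ (gψ y) y)
    (hψ_sc : ∀ x ∈ X, ∀ y ∈ X, 1 / 2 * nrm (x - y) ^ 2 ≤ breg ψ gψ x y)
    (μf μh : ℝ) (hμh : 0 ≤ μh)
    (hf_sc : ∀ x ∈ X, ∀ y ∈ X, ∀ g ∈ subgrad X f y,
      μf * breg ψ gψ x y ≤ f x - f y - ⟪g, x - y⟫)
    (hh_sc : ∀ x ∈ X, ∀ y ∈ X, ∀ g ∈ subgrad X h y,
      μh * breg ψ gψ x y ≤ h x - h y - ⟪g, x - y⟫)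
    (L M : ℝ)
    (hsmooth : ∀ x ∈ X, ∀ y ∈ X, ∀ g ∈ subgrad X f y,
      f x - f y - ⟪g, x - y⟫ ≤ L / 2 * nrm (x - y) ^ 2 + M * nrm (x - y))
    (T : ℕ) (hT : 2 ≤ T)
    (η : ℕ → ℝ) (hη_pos : ∀ t ∈ Finset.Icc 1 T, 0 < η t)
    (hη_le : ∀ t ∈ Finset.Icc 1 T, max (2 * L) μf * η t ≤ 1)
    (γ : ℕ → ℝ)
    (hγ : ∀ t, γ t = η t * ∏ s ∈ Finset.Icc 2 t, (1 + μh * η (s - 1)) / (1 - μf * η s))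
    (ghat gsub : ℕ → EuclideanSpace ℝ (Fin d))
    (x : ℕ → EuclideanSpace ℝ (Fin d)) (hx1 : x 1 ∈ X)
    (hgsub : ∀ t ∈ Finset.Icc 1 T, gsub t ∈ subgrad X f (x t))
    (hupdate : ∀ t ∈ Finset.Icc 1 T, x (t + 1) ∈ X ∧
      IsMinOn (fun u => h u + ⟪ghat t, u - x t⟫ + breg ψ gψ u (x t) / η t) X (x (t + 1)))
    (w : ℕ → ℝ)
    (hw_nonneg : ∀ t ∈ Finset.Icc 1 T, 0 ≤ w t)
    (v : ℕ → ℝ)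
    (hv : ∀ t ≤ T, v t = w T * γ T / ∑ s ∈ Finset.Icc (max t 1) T, w s * γ s)
    (hv_pos : ∀ t ≤ T, 0 < v t)
    (xpt : EuclideanSpace ℝ (Fin d)) (hxpt : xpt ∈ X)
    (z : ℕ → EuclideanSpace ℝ (Fin d))
    (hz : ∀ t ≤ T, z t =
      (v 0 / v t) • xpt + ∑ s ∈ Finset.Icc 1 t, ((v s - v (s - 1)) / v t) • x s) :
    w T * γ T * v T * ((f (x (T + 1)) + h (x (T + 1))) - (f xpt + h xpt)) ≤
      w 1 * (1 - μf * η 1) * v 0 * breg ψ gψ xpt (x 1)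
      + ∑ t ∈ Finset.Icc 1 T,
          2 * w t * γ t * η t * v t * (M ^ 2 + dualNorm nrm (ghat t - gsub t) ^ 2)
      + ∑ t ∈ Finset.Icc 1 T,
          w t * γ t * v (t - 1) * ⟪ghat t - gsub t, z (t - 1) - x t⟫
      + ∑ t ∈ Finset.Icc 2 T,
          (w t - w (t - 1)) * γ t * ((η t)⁻¹ - μf) * v (t - 1) *
            breg ψ gψ (z (t - 1)) (x t) := by
  have hT1 : 1 ≤ T := by omega
  have hstep_size : ∀ t ∈ Icc 1 T, 2 * L * η t ≤ 1 ∧ μf * η t ≤ 1 := fun t ht => by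
    have := hη_le t ht
    rwa [max_mul_of_nonneg _ _ (hη_pos t ht).le, max_le_iff] at this
  have hxX : ∀ t ∈ Icc 1 (T + 1), x t ∈ X := by
    intro t ht
    obtain ⟨s, rfl⟩ : ∃ s, t = s + 1 := ⟨t - 1, by simp at ht; omega⟩
    rcases Nat.eq_zero_or_pos s with rfl | hs
    · exact hx1
    · exact (hupdate s (mem_Icc.2 ⟨hs, by simp at ht; omega⟩)).1
  have hxX' : ∀ t ∈ Icc 1 T, x t ∈ X := fun t ht => hxX t (by simp at ht ⊢; omega)
  have hwγ : ∀ t ∈ Icc 1 T, 0 ≤ w t * γ t := fun t ht =>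
    mul_nonneg (hw_nonneg t ht) (gamma_nonneg hγ hμh hη_pos (fun s hs => (hstep_size s hs).2) ht)
  have hγT : γ T ≠ 0 := right_ne_zero_of_mul
    (last_ne_zero_and_weight_last_eq_one (a := fun s => w s * γ s) hv hv_pos hT1).1
  have hv_mono : ∀ t < T, v t ≤ v (t + 1) := fun t ht => weight_le_succ hv hv_pos hwγ ht
  have hzX : ∀ t ≤ T, z t ∈ X := fun t ht => average_mem hv_pos hz hXcv hv_mono hxpt hxX' ht
  have hpred : ∀ t ∈ Icc 1 T, t - 1 < T ∧ v (t - 1) ≤ v t ∧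
      v t • z t = v (t - 1) • z (t - 1) + (v t - v (t - 1)) • x t := by
    intro t ht
    obtain ⟨s, rfl⟩ : ∃ s, t = s + 1 := ⟨t - 1, by simp at ht; omega⟩
    have hsT : s < T := by simp at ht; omega
    exact ⟨by omega, hv_mono s hsT, smul_average_succ hv_pos hz hsT⟩
  have hstep := fun t (ht : t ∈ Icc 1 T) => csmd_averaged_step_le hXcv hnrm_nonneg hnrm_zero
    hnrm_smul hnrm_tri (hh_cv.subset (Set.subset_univ X) hXcv) hψ_diff hψ_sc hf_sc hh_sc hsmooth
    (hη_pos t ht) (hstep_size t ht).1 (hstep_size t ht).2 (hwγ t ht)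
    (hv_pos _ (hpred t ht).1.le).le (hpred t ht).2.1 (hxX' t ht) (hupdate t ht).1
    (hzX t (mem_Icc.1 ht).2) (hzX _ (hpred t ht).1.le) (hgsub t ht) (hupdate t ht).2
    (hpred t ht).2.2
  have hlast : 0 ≤ w T * γ T * ((η T)⁻¹ + μh) * v T * breg ψ gψ (z T) (x (T + 1)) := by
    have hTmem : T ∈ Icc 1 T := mem_Icc.2 ⟨hT1, le_rfl⟩
    have := hη_pos T hTmem
    exact mul_nonneg (mul_nonneg (mul_nonneg (hwγ T hTmem) (by positivity)) (hv_pos T le_rfl).le)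
      (breg_nonneg hψ_sc (hzX T le_rfl) (hxX (T + 1) (mem_Icc.2 ⟨by omega, le_rfl⟩)))
  have hbregman := bregman_weight_telescope hγ (w := w) (v := v)
    (B := fun t => breg ψ gψ (z (t - 1)) (x t)) hT1 hη_pos hγT (by simpa using hlast)
  simp only [Nat.add_sub_cancel, Nat.sub_self, average_zero hv_pos hz] at hbregman
  calc w T * γ T * v T * ((f (x (T + 1)) + h (x (T + 1))) - (f xpt + h xpt))
      ≤ ∑ t ∈ Icc 1 T,
          w t * γ t * v t * (f (x (t + 1)) + h (x (t + 1)) - (f (z t) + h (z t))) :=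
        ((hf_cv.add hh_cv).subset (Set.subset_univ X) hXcv).mul_sub_le_sum_sub_average
          (a := fun s => w s * γ s) hT1 hwγ hv hv_pos hz hxpt hxX'
    _ ≤ _ := sum_le_sum hstep
    _ ≤ _ := by
      rw [sum_add_distrib, sum_add_distrib]
      linarith

/-- Lemma 2 (unified deterministic inequality for CSMD). -/
theorem csmd_unified_deterministic
    {d : ℕ}
    (X : Set (EuclideanSpace ℝ (Fin d))) (hXne : X.Nonempty) (hXcl : IsClosed X) (hXcv : Convex ℝ X)
    (nrm : EuclideanSpace ℝ (Fin d) → ℝ)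
    (hnrm_nonneg : ∀ x, 0 ≤ nrm x)
    (hnrm_zero : ∀ x, nrm x = 0 ↔ x = 0)
    (hnrm_smul : ∀ (c : ℝ) (x : EuclideanSpace ℝ (Fin d)), nrm (c • x) = |c| * nrm x)
    (hnrm_tri : ∀ x y, nrm (x + y) ≤ nrm x + nrm y)
    (f h : EuclideanSpace ℝ (Fin d) → ℝ)
    (hf_cv : ConvexOn ℝ Set.univ f) (hh_cv : ConvexOn ℝ Set.univ h)
    (ψ : EuclideanSpace ℝ (Fin d) → ℝ) (gψ : EuclideanSpace ℝ (Fin d) → EuclideanSpace ℝ (Fin d))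
    (hψ_diff : ∀ y, HasGradientAt ψ (gψ y) y)
    (hψ_sc : ∀ x ∈ X, ∀ y ∈ X, 1 / 2 * nrm (x - y) ^ 2 ≤ breg ψ gψ x y)
    (μf μh : ℝ) (hμf : 0 ≤ μf) (hμh : 0 ≤ μh) (hμ0 : μf = 0 ∨ μh = 0)
    (hf_sc : ∀ x ∈ X, ∀ y ∈ X, ∀ g ∈ subgrad X f y,
      μf * breg ψ gψ x y ≤ f x - f y - ⟪g, x - y⟫)
    (hh_sc : ∀ x ∈ X, ∀ y ∈ X, ∀ g ∈ subgrad X h y,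
      μh * breg ψ gψ x y ≤ h x - h y - ⟪g, x - y⟫)
    (L M : ℝ) (hL : 0 ≤ L) (hM : 0 ≤ M)
    (hsmooth : ∀ x ∈ X, ∀ y ∈ X, ∀ g ∈ subgrad X f y,
      f x - f y - ⟪g, x - y⟫ ≤ L / 2 * nrm (x - y) ^ 2 + M * nrm (x - y))
    (T : ℕ) (hT : 2 ≤ T)
    (η : ℕ → ℝ) (hη_pos : ∀ t ∈ Finset.Icc 1 T, 0 < η t)
    (hη_le : ∀ t ∈ Finset.Icc 1 T, max (2 * L) μf * η t ≤ 1)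
    (γ : ℕ → ℝ)
    (hγ : ∀ t, γ t = η t * ∏ s ∈ Finset.Icc 2 t, (1 + μh * η (s - 1)) / (1 - μf * η s))
    (ghat gsub : ℕ → EuclideanSpace ℝ (Fin d))
    (x : ℕ → EuclideanSpace ℝ (Fin d)) (hx1 : x 1 ∈ X)
    (hgsub : ∀ t ∈ Finset.Icc 1 T, gsub t ∈ subgrad X f (x t))
    (hupdate : ∀ t ∈ Finset.Icc 1 T, x (t + 1) ∈ X ∧
      IsMinOn (fun u => h u + ⟪ghat t, u - x t⟫ + breg ψ gψ u (x t) / η t) X (x (t + 1)))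
    (w : ℕ → ℝ)
    (hw_nonneg : ∀ t ∈ Finset.Icc 1 T, 0 ≤ w t)
    (hw_mono : ∀ s ∈ Finset.Icc 1 T, ∀ t ∈ Finset.Icc 1 T, s ≤ t → w t ≤ w s)
    (v : ℕ → ℝ)
    (hv : ∀ t ≤ T, v t = w T * γ T / ∑ s ∈ Finset.Icc (max t 1) T, w s * γ s)
    (hv_pos : ∀ t ≤ T, 0 < v t)
    (xpt : EuclideanSpace ℝ (Fin d)) (hxpt : xpt ∈ X)
    (z : ℕ → EuclideanSpace ℝ (Fin d))
    (hz : ∀ t ≤ T, z t =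
      (v 0 / v t) • xpt + ∑ s ∈ Finset.Icc 1 t, ((v s - v (s - 1)) / v t) • x s) :
    w T * γ T * v T * ((f (x (T + 1)) + h (x (T + 1))) - (f xpt + h xpt)) ≤
      w 1 * (1 - μf * η 1) * v 0 * breg ψ gψ xpt (x 1)
      + ∑ t ∈ Finset.Icc 1 T,
          2 * w t * γ t * η t * v t * (M ^ 2 + dualNorm nrm (ghat t - gsub t) ^ 2)
      + ∑ t ∈ Finset.Icc 1 T,
          w t * γ t * v (t - 1) * ⟪ghat t - gsub t, z (t - 1) - x t⟫
      + ∑ t ∈ Finset.Icc 2 T,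
          (w t - w (t - 1)) * γ t * ((η t)⁻¹ - μf) * v (t - 1) *
            breg ψ gψ (z (t - 1)) (x t) :=
  csmd_unified_deterministic_general X hXcv nrm hnrm_nonneg hnrm_zero hnrm_smul hnrm_tri f h hf_cv
    hh_cv ψ gψ hψ_diff hψ_sc μf μh hμh hf_sc hh_sc L M hsmooth T hT η hη_pos hη_le γ hγ ghat gsub x
    hx1 hgsub hupdate w hw_nonneg v hv hv_pos xpt hxpt z hz
end
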